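/- arXiv:1112.5030 — 3 statements merged into one kernel-verified Lean document; each statement's English description precedes it below -/
import Mathlib

section
/- Let p be a prime and let x ∈ V(ℤ_p). (a) Suppose p ≠ 2 and the reduction of x mod p is of type (1²1). Then x mod p² lies in V_{p²}(1²1_max) if and only if ord_p(P(x)) = 1, and x mod p² lies in V_{p²}(1²1_*) if and only if ord_p(P(x)) ≥ 2. (b) Suppose p ∉ {2,3} and the reduction of x mod p is of type (1³). Then x mod p² lies in V_{p²}(1³_max) iff ord_p(P(x)) = 2, in V_{p²}(1³_*) iff ord_p(P(x)) = 3, and in V_{p²}(1³_**) iff ord_p(P(x)) ≥ 4. -/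
/- Common setup: the space of binary cubic forms, the twisted GL₂-action,
the dual action, discriminants, finite Fourier transforms and orbital Gauss sums. -/

noncomputable section

open scoped BigOperators

namespace OrbitalL

/-- The space of binary cubic forms `x₁u³ + x₂u²v + x₃uv² + x₄v³` over `R`,
identified with coefficient quadruples. -/
abbrev V (R : Type*) := Fin 4 → R

variable {R : Type*} [CommRing R]

/-- Determinant of an element of `GL₂(R)`, as an element of `R`. -/
def detv (g : Matrix.GeneralLinearGroup (Fin 2) R) : R :=
  Matrix.det (g : Matrix (Fin 2) (Fin 2) R)

/-- The twisted action of `GL₂(R)` on binary cubic forms: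
`(g·x)(u,v) = (det g)⁻¹ · x(αu + γv, βu + δv)`, in coordinates. -/
def gAct (g : Matrix.GeneralLinearGroup (Fin 2) R) (x : V R) : V R :=
  let α := (g : Matrix (Fin 2) (Fin 2) R) 0 0
  let β := (g : Matrix (Fin 2) (Fin 2) R) 0 1
  let γ := (g : Matrix (Fin 2) (Fin 2) R) 1 0
  let δ := (g : Matrix (Fin 2) (Fin 2) R) 1 1
  let d : R := ((Matrix.GeneralLinearGroup.det g)⁻¹ : Rˣ)
  ![d * (α ^ 3 * x 0 + α ^ 2 * β * x 1 + α * β ^ 2 * x 2 + β ^ 3 * x 3),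
    d * (3 * α ^ 2 * γ * x 0 + (α ^ 2 * δ + 2 * α * β * γ) * x 1
          + (β ^ 2 * γ + 2 * α * β * δ) * x 2 + 3 * β ^ 2 * δ * x 3),
    d * (3 * α * γ ^ 2 * x 0 + (β * γ ^ 2 + 2 * α * γ * δ) * x 1
          + (α * δ ^ 2 + 2 * β * γ * δ) * x 2 + 3 * β * δ ^ 2 * x 3),
    d * (γ ^ 3 * x 0 + γ ^ 2 * δ * x 1 + γ * δ ^ 2 * x 2 + δ ^ 3 * x 3)]

/-- The left action of `GL₂(R)` on the dual space `V*`, determined by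
`[x, g∗y] = [(det g)·g⁻¹·x, y]`, in coordinates. -/
def dAct (g : Matrix.GeneralLinearGroup (Fin 2) R) (y : V R) : V R :=
  let α := (g : Matrix (Fin 2) (Fin 2) R) 0 0
  let β := (g : Matrix (Fin 2) (Fin 2) R) 0 1
  let γ := (g : Matrix (Fin 2) (Fin 2) R) 1 0
  let δ := (g : Matrix (Fin 2) (Fin 2) R) 1 1
  let d : R := ((Matrix.GeneralLinearGroup.det g)⁻¹ : Rˣ)
  ![d * (δ ^ 3 * y 0 - 3 * γ * δ ^ 2 * y 1 + 3 * γ ^ 2 * δ * y 2 - γ ^ 3 * y 3),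
    d * (-(β * δ ^ 2) * y 0 + (α * δ ^ 2 + 2 * β * γ * δ) * y 1
          - (β * γ ^ 2 + 2 * α * γ * δ) * y 2 + α * γ ^ 2 * y 3),
    d * (β ^ 2 * δ * y 0 - (β ^ 2 * γ + 2 * α * β * δ) * y 1
          + (α ^ 2 * δ + 2 * α * β * γ) * y 2 - α ^ 2 * γ * y 3),
    d * (-(β ^ 3) * y 0 + 3 * α * β ^ 2 * y 1 - 3 * α ^ 2 * β * y 2 + α ^ 3 * y 3)]

/-- The canonical pairing `[x,y] = x₁y₁ + x₂y₂ + x₃y₃ + x₄y₄` between `V` and `V*`. -/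
def pairV (x y : V R) : R := x 0 * y 0 + x 1 * y 1 + x 2 * y 2 + x 3 * y 3

/-- The discriminant of a binary cubic form. -/
def P (x : V R) : R :=
  (x 1) ^ 2 * (x 2) ^ 2 + 18 * x 0 * x 1 * x 2 * x 3 - 4 * x 0 * (x 2) ^ 3
    - 4 * (x 1) ^ 3 * x 3 - 27 * (x 0) ^ 2 * (x 3) ^ 2

/-- The discriminant on the dual space. -/
def Pstar (y : V R) : R :=
  3 * (y 1) ^ 2 * (y 2) ^ 2 + 6 * y 0 * y 1 * y 2 * y 3 - 4 * y 0 * (y 2) ^ 3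
    - 4 * (y 1) ^ 3 * y 3 - (y 0) ^ 2 * (y 3) ^ 2

instance (N : ℕ) [NeZero N] : Fintype (Matrix.GeneralLinearGroup (Fin 2) (ZMod N)) :=
  inferInstanceAs (Fintype (Matrix (Fin 2) (Fin 2) (ZMod N))ˣ)

/-- The additive character `r ↦ exp(2πi·r/N)` of `ℤ/Nℤ`. -/
def eN (N : ℕ) (r : ZMod N) : ℂ :=
  Complex.exp (2 * Real.pi * Complex.I * (r.val : ℂ) / (N : ℂ))

/-- The orbital Gauss sum `W_N(χ,a,b) = Σ_{g ∈ GL₂(ℤ/Nℤ)} χ(det g)·⟨g·a, b⟩_N`. -/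
def W (N : ℕ) [NeZero N] (χ : DirichletCharacter ℂ N) (a b : V (ZMod N)) : ℂ :=
  ∑ g : Matrix.GeneralLinearGroup (Fin 2) (ZMod N),
    χ (detv g) * eN N (pairV (gAct g a) b)

/-- The finite Fourier transform `f̂(b) = N⁻⁴ Σ_a f(a)·⟨a,b⟩_N`. -/
def fhat (N : ℕ) [NeZero N] (f : V (ZMod N) → ℂ) (b : V (ZMod N)) : ℂ :=
  ((N : ℂ) ^ 4)⁻¹ * ∑ a : V (ZMod N), f a * eN N (pairV a b)

/-- Componentwise reduction `V(ℤ/Nℤ) → V(ℤ/Mℤ)` for `M ∣ N`. -/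
def Vred {N M : ℕ} (h : M ∣ N) (x : V (ZMod N)) : V (ZMod M) :=
  fun i => ZMod.castHom h (ZMod M) (x i)

/- Factorization-type predicates for binary cubic forms over a field. -/

/-- The product of the linear form `l₁u + l₂v` with the quadratic form
`q₁u² + q₂uv + q₃v²`, as a binary cubic form. -/
def linMul (l : R × R) (q : Fin 3 → R) : V R :=
  ![l.1 * q 0, l.1 * q 1 + l.2 * q 0, l.1 * q 2 + l.2 * q 1, l.2 * q 2]

/-- The product of two linear forms, as a binary quadratic form. -/
def lin2Mul (l m : R × R) : Fin 3 → R :=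
  ![l.1 * m.1, l.1 * m.2 + l.2 * m.1, l.2 * m.2]

/-- The product of three linear forms, as a binary cubic form. -/
def lin3Mul (l m n : R × R) : V R :=
  ![l.1 * m.1 * n.1,
    l.1 * m.1 * n.2 + l.1 * m.2 * n.1 + l.2 * m.1 * n.1,
    l.1 * m.2 * n.2 + l.2 * m.1 * n.2 + l.2 * m.2 * n.1,
    l.2 * m.2 * n.2]

/-- Two linear forms are proportional if one is a nonzero scalar multiple of the other. -/
def Proportional (l m : R × R) : Prop := ∃ t : R, t ≠ 0 ∧ m = (t * l.1, t * l.2)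

/-- A binary quadratic form is irreducible if it is nonzero and is not a product
of two linear forms. -/
def IrredQuad (q : Fin 3 → R) : Prop := q ≠ 0 ∧ ¬∃ l m : R × R, q = lin2Mul l m

/-- Type (3): no linear factor (in particular nonzero). -/
def IsType3 (a : V R) : Prop := ¬∃ (l : R × R) (q : Fin 3 → R), l ≠ 0 ∧ a = linMul l q

/-- Type (21): a linear form times an irreducible quadratic form. -/
def IsType21 (a : V R) : Prop :=
  ∃ (l : R × R) (q : Fin 3 → R), l ≠ 0 ∧ IrredQuad q ∧ a = linMul l q

/-- Type (111): a product of three pairwise non-proportional linear forms. -/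
def IsType111 (a : V R) : Prop :=
  ∃ l m n : R × R, l ≠ 0 ∧ m ≠ 0 ∧ n ≠ 0 ∧ ¬Proportional l m ∧ ¬Proportional l n ∧
    ¬Proportional m n ∧ a = lin3Mul l m n

/-- Type (1²1): `l²·m` with `l`, `m` non-proportional linear forms. -/
def IsType121 (a : V R) : Prop :=
  ∃ l m : R × R, l ≠ 0 ∧ m ≠ 0 ∧ ¬Proportional l m ∧ a = lin3Mul l l m

/-- Type (1³): a nonzero scalar times the cube of a linear form. -/
def IsType13 (a : V R) : Prop :=
  ∃ (c : R) (l : R × R), c ≠ 0 ∧ l ≠ 0 ∧ a = c • lin3Mul l l l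

/- The strata of `V(ℤ/p²ℤ)`. -/

theorem p_dvd_p_sq (p : ℕ) : p ∣ p ^ 2 := dvd_pow_self p (by norm_num)

/-- Reduction `V(ℤ/p²ℤ) → V(ℤ/pℤ)`. -/
def Vredp (p : ℕ) (x : V (ZMod (p ^ 2))) : V (ZMod p) := Vred (p_dvd_p_sq p) x

/-- `x ∈ pR` for `R = ℤ/p²ℤ`. -/
def InPR (p : ℕ) (x : ZMod (p ^ 2)) : Prop := ∃ y : ZMod (p ^ 2), x = (p : ZMod (p ^ 2)) * y

/-- `x ∈ pR^× = pR ∖ {0}` for `R = ℤ/p²ℤ`. -/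
def InPRx (p : ℕ) (x : ZMod (p ^ 2)) : Prop := InPR p x ∧ x ≠ 0

def D121max (p : ℕ) : Set (V (ZMod (p ^ 2))) :=
  {a | a 0 = 0 ∧ IsUnit (a 1) ∧ InPR p (a 2) ∧ InPRx p (a 3)}

def D121s (p : ℕ) : Set (V (ZMod (p ^ 2))) :=
  {a | a 0 = 0 ∧ IsUnit (a 1) ∧ InPR p (a 2) ∧ a 3 = 0}

def D13max (p : ℕ) : Set (V (ZMod (p ^ 2))) :=
  {a | IsUnit (a 0) ∧ InPR p (a 1) ∧ InPR p (a 2) ∧ InPRx p (a 3)}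

def D13s (p : ℕ) : Set (V (ZMod (p ^ 2))) :=
  {a | IsUnit (a 0) ∧ InPR p (a 1) ∧ InPRx p (a 2) ∧ a 3 = 0}

def D13ss (p : ℕ) : Set (V (ZMod (p ^ 2))) :=
  {a | IsUnit (a 0) ∧ InPR p (a 1) ∧ a 2 = 0 ∧ a 3 = 0}

/-- The `GL₂`-orbit of a subset of `V R`. -/
def GOrbit (S : Set (V R)) : Set (V R) :=
  {x | ∃ (g : Matrix.GeneralLinearGroup (Fin 2) R) (a : V R), a ∈ S ∧ x = gAct g a}

/-- The `GL₂`-orbit of a single element. -/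
def orbitOf (a : V R) : Set (V R) :=
  {x | ∃ g : Matrix.GeneralLinearGroup (Fin 2) R, x = gAct g a}

def V121max (p : ℕ) : Set (V (ZMod (p ^ 2))) := GOrbit (D121max p)
def V121s (p : ℕ) : Set (V (ZMod (p ^ 2))) := GOrbit (D121s p)
def V13max (p : ℕ) : Set (V (ZMod (p ^ 2))) := GOrbit (D13max p)
def V13s (p : ℕ) : Set (V (ZMod (p ^ 2))) := GOrbit (D13s p)
def V13ss (p : ℕ) : Set (V (ZMod (p ^ 2))) := GOrbit (D13ss p)

/-- The set of forms mod `p²` detecting nonmaximal cubic rings at `p`. -/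
def Vnm (p : ℕ) : Set (V (ZMod (p ^ 2))) :=
  {x | ∃ y : V (ZMod (p ^ 2)), x = (p : ZMod (p ^ 2)) • y} ∪ V13ss p ∪ V13s p ∪ V121s p

/-- The set of forms mod `p²` detecting nonmaximal-or-totally-ramified cubic rings at `p`. -/
def Vnm' (p : ℕ) : Set (V (ZMod (p ^ 2))) := Vnm p ∪ V13max p

/-- The alternating pairing on `V(ℤ/p²ℤ)` induced by identifying `V*` with `V` via `ι`:
`[x,y] = x₄y₁ − (1/3)x₃y₂ + (1/3)x₂y₃ − x₁y₄`. -/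
def pairAlt (p : ℕ) (x y : V (ZMod (p ^ 2))) : ZMod (p ^ 2) :=
  x 3 * y 0 - (3 : ZMod (p ^ 2))⁻¹ * (x 2 * y 1) + (3 : ZMod (p ^ 2))⁻¹ * (x 1 * y 2)
    - x 0 * y 3

/-- The finite Fourier transform on `V(ℤ/p²ℤ)` under the identification of `V*` with `V`. -/
def fhatAlt (p : ℕ) [NeZero p] (f : V (ZMod (p ^ 2)) → ℂ) (b : V (ZMod (p ^ 2))) : ℂ :=
  (((p : ℂ) ^ 2) ^ 4)⁻¹ * ∑ a : V (ZMod (p ^ 2)), f a * eN (p ^ 2) (pairAlt p a b)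

/-- The orbital Gauss sum with trivial character on `V(ℤ/p²ℤ)`, under the
identification of `V*` with `V`. -/
def Walt (p : ℕ) [NeZero p] (a b : V (ZMod (p ^ 2))) : ℂ :=
  ∑ g : Matrix.GeneralLinearGroup (Fin 2) (ZMod (p ^ 2)), eN (p ^ 2) (pairAlt p (gAct g a) b)



/-! ### Auxiliary infrastructure for the proof -/

section Aux

variable {R : Type*} [CommRing R]

lemma V_ext {x y : V R} (h0 : x 0 = y 0) (h1 : x 1 = y 1) (h2 : x 2 = y 2)
    (h3 : x 3 = y 3) : x = y := by
  funext i; fin_cases i <;> assumption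

/-- Abstract form of the twisted action with scalar `d`. -/
def act4 (α β γ δ d : R) (x : V R) : V R :=
  ![d * (α ^ 3 * x 0 + α ^ 2 * β * x 1 + α * β ^ 2 * x 2 + β ^ 3 * x 3),
    d * (3 * α ^ 2 * γ * x 0 + (α ^ 2 * δ + 2 * α * β * γ) * x 1
          + (β ^ 2 * γ + 2 * α * β * δ) * x 2 + 3 * β ^ 2 * δ * x 3),
    d * (3 * α * γ ^ 2 * x 0 + (β * γ ^ 2 + 2 * α * γ * δ) * x 1
          + (α * δ ^ 2 + 2 * β * γ * δ) * x 2 + 3 * β * δ ^ 2 * x 3),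
    d * (γ ^ 3 * x 0 + γ ^ 2 * δ * x 1 + γ * δ ^ 2 * x 2 + δ ^ 3 * x 3)]

lemma act4_apply (α β γ δ d : R) (x : V R) :
    act4 α β γ δ d x 0 = d * (α ^ 3 * x 0 + α ^ 2 * β * x 1 + α * β ^ 2 * x 2 + β ^ 3 * x 3)
    ∧ act4 α β γ δ d x 1 = d * (3 * α ^ 2 * γ * x 0 + (α ^ 2 * δ + 2 * α * β * γ) * x 1
          + (β ^ 2 * γ + 2 * α * β * δ) * x 2 + 3 * β ^ 2 * δ * x 3)
    ∧ act4 α β γ δ d x 2 = d * (3 * α * γ ^ 2 * x 0 + (β * γ ^ 2 + 2 * α * γ * δ) * x 1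
          + (α * δ ^ 2 + 2 * β * γ * δ) * x 2 + 3 * β * δ ^ 2 * x 3)
    ∧ act4 α β γ δ d x 3 = d * (γ ^ 3 * x 0 + γ ^ 2 * δ * x 1 + γ * δ ^ 2 * x 2 + δ ^ 3 * x 3) :=
  ⟨rfl, rfl, rfl, rfl⟩

lemma gAct_eq (g : Matrix.GeneralLinearGroup (Fin 2) R) (x : V R) :
    gAct g x = act4 ((g : Matrix (Fin 2) (Fin 2) R) 0 0) ((g : Matrix (Fin 2) (Fin 2) R) 0 1)
      ((g : Matrix (Fin 2) (Fin 2) R) 1 0) ((g : Matrix (Fin 2) (Fin 2) R) 1 1)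
      (((Matrix.GeneralLinearGroup.det g)⁻¹ : Rˣ) : R) x := rfl

lemma det_data (g : Matrix.GeneralLinearGroup (Fin 2) R) :
    (((Matrix.GeneralLinearGroup.det g)⁻¹ : Rˣ) : R) *
      ((g : Matrix (Fin 2) (Fin 2) R) 0 0 * (g : Matrix (Fin 2) (Fin 2) R) 1 1
        - (g : Matrix (Fin 2) (Fin 2) R) 0 1 * (g : Matrix (Fin 2) (Fin 2) R) 1 0) = 1 := by
  have h := Units.inv_mul (Matrix.GeneralLinearGroup.det g)
  rwa [Matrix.GeneralLinearGroup.val_det_apply, Matrix.det_fin_two] at h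

lemma mul_eq_one_unique {a b c : R} (h1 : a * b = 1) (h2 : c * b = 1) : a = c := by
  calc a = a * (c * b) := by rw [h2, mul_one]
  _ = c * (a * b) := by ring
  _ = c := by rw [h1, mul_one]

lemma act4_comp (α β γ δ d α' β' γ' δ' d' : R) (x : V R) :
    act4 α' β' γ' δ' d' (act4 α β γ δ d x)
      = act4 (α' * α + β' * γ) (α' * β + β' * δ) (γ' * α + δ' * γ) (γ' * β + δ' * δ)
          (d * d') x := by
  obtain ⟨h0, h1, h2, h3⟩ := act4_apply α β γ δ d x
  obtain ⟨g0, g1, g2, g3⟩ := act4_apply α' β' γ' δ' d' (act4 α β γ δ d x)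
  obtain ⟨k0, k1, k2, k3⟩ := act4_apply (α' * α + β' * γ) (α' * β + β' * δ) (γ' * α + δ' * γ)
    (γ' * β + δ' * δ) (d * d') x
  refine V_ext ?_ ?_ ?_ ?_
  · rw [g0, k0, h0, h1, h2, h3]; ring
  · rw [g1, k1, h0, h1, h2, h3]; ring
  · rw [g2, k2, h0, h1, h2, h3]; ring
  · rw [g3, k3, h0, h1, h2, h3]; ring

lemma act4_P (α β γ δ d : R) (hd : d * (α * δ - β * γ) = 1) (x : V R) :
    P (act4 α β γ δ d x) = (α * δ - β * γ) ^ 2 * P x := by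
  obtain ⟨h0, h1, h2, h3⟩ := act4_apply α β γ δ d x
  simp only [P, h0, h1, h2, h3]
  linear_combination (d ^ 3 * (α * δ - β * γ) ^ 3 + d ^ 2 * (α * δ - β * γ) ^ 2
      + d * (α * δ - β * γ) + 1) * (α * δ - β * γ) ^ 2
      * ((x 1) ^ 2 * (x 2) ^ 2 + 18 * x 0 * x 1 * x 2 * x 3 - 4 * x 0 * (x 2) ^ 3
        - 4 * (x 1) ^ 3 * x 3 - 27 * (x 0) ^ 2 * (x 3) ^ 2) * hd

lemma dinv_mul (g h : Matrix.GeneralLinearGroup (Fin 2) R) :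
    (((Matrix.GeneralLinearGroup.det (g * h))⁻¹ : Rˣ) : R)
      = (((Matrix.GeneralLinearGroup.det h)⁻¹ : Rˣ) : R)
        * (((Matrix.GeneralLinearGroup.det g)⁻¹ : Rˣ) : R) := by
  rw [map_mul, mul_inv, Units.val_mul, mul_comm]

lemma gAct_one (x : V R) : gAct (1 : Matrix.GeneralLinearGroup (Fin 2) R) x = x := by
  funext i
  fin_cases i <;> simp [gAct, Matrix.GeneralLinearGroup.det]

lemma gAct_mul (g h : Matrix.GeneralLinearGroup (Fin 2) R) (x : V R) :
    gAct (g * h) x = gAct g (gAct h x) := by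
  have e : ∀ i j, ((g * h : Matrix.GeneralLinearGroup (Fin 2) R) : Matrix (Fin 2) (Fin 2) R) i j
      = (g : Matrix (Fin 2) (Fin 2) R) i 0 * (h : Matrix (Fin 2) (Fin 2) R) 0 j
        + (g : Matrix (Fin 2) (Fin 2) R) i 1 * (h : Matrix (Fin 2) (Fin 2) R) 1 j := by
    intro i j
    rw [Units.val_mul, Matrix.mul_apply, Fin.sum_univ_two]
  rw [gAct_eq (g * h), gAct_eq g, gAct_eq h, act4_comp, e 0 0, e 0 1, e 1 0, e 1 1, dinv_mul]

lemma gAct_cancel (g : Matrix.GeneralLinearGroup (Fin 2) R) (x : V R) :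
    gAct g (gAct g⁻¹ x) = x := by
  rw [← gAct_mul, mul_inv_cancel, gAct_one]

lemma gAct_cancel' (g : Matrix.GeneralLinearGroup (Fin 2) R) (x : V R) :
    gAct g⁻¹ (gAct g x) = x := by
  rw [← gAct_mul, inv_mul_cancel, gAct_one]

lemma P_gAct (g : Matrix.GeneralLinearGroup (Fin 2) R) (x : V R) :
    P (gAct g x) = ((g : Matrix (Fin 2) (Fin 2) R) 0 0 * (g : Matrix (Fin 2) (Fin 2) R) 1 1
      - (g : Matrix (Fin 2) (Fin 2) R) 0 1 * (g : Matrix (Fin 2) (Fin 2) R) 1 0) ^ 2 * P x := by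
  rw [gAct_eq, act4_P _ _ _ _ _ (det_data g)]

lemma map_act4 {S : Type*} [CommRing S] (f : R →+* S) (α β γ δ d : R) (x : V R) :
    (fun i => f (act4 α β γ δ d x i))
      = act4 (f α) (f β) (f γ) (f δ) (f d) (fun i => f (x i)) := by
  obtain ⟨h0, h1, h2, h3⟩ := act4_apply α β γ δ d x
  obtain ⟨k0, k1, k2, k3⟩ := act4_apply (f α) (f β) (f γ) (f δ) (f d) (fun i => f (x i))
  refine V_ext ?_ ?_ ?_ ?_
  · show f (act4 α β γ δ d x 0) = _
    rw [h0, k0]; push_cast [map_mul, map_add, map_pow, map_ofNat]; ring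
  · show f (act4 α β γ δ d x 1) = _
    rw [h1, k1]; push_cast [map_mul, map_add, map_pow, map_ofNat]; ring
  · show f (act4 α β γ δ d x 2) = _
    rw [h2, k2]; push_cast [map_mul, map_add, map_pow, map_ofNat]; ring
  · show f (act4 α β γ δ d x 3) = _
    rw [h3, k3]; push_cast [map_mul, map_add, map_pow, map_ofNat]; ring

lemma red_gAct {S : Type*} [CommRing S] (f : R →+* S) (g : Matrix.GeneralLinearGroup (Fin 2) R)
    (g' : Matrix.GeneralLinearGroup (Fin 2) S)
    (hm : ∀ i j, f ((g : Matrix (Fin 2) (Fin 2) R) i j) = (g' : Matrix (Fin 2) (Fin 2) S) i j)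
    (x : V R) : (fun i => f (gAct g x i)) = gAct g' (fun i => f (x i)) := by
  have hd := det_data g
  have hd' := det_data g'
  have hfd : f (((Matrix.GeneralLinearGroup.det g)⁻¹ : Rˣ) : R)
      = (((Matrix.GeneralLinearGroup.det g')⁻¹ : Sˣ) : S) := by
    refine mul_eq_one_unique ?_ hd'
    rw [← hm 0 0, ← hm 1 1, ← hm 0 1, ← hm 1 0, ← map_mul, ← map_mul, ← map_sub, ← map_mul]
    rw [hd, map_one]
  rw [gAct_eq g, gAct_eq g', map_act4, hfd, hm 0 0, hm 0 1, hm 1 0, hm 1 1]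

/-- Build a `GL₂` element from a matrix with unit determinant. -/
def glOf {A : Matrix (Fin 2) (Fin 2) R} (h : IsUnit A.det) :
    Matrix.GeneralLinearGroup (Fin 2) R :=
  ((Matrix.isUnit_iff_isUnit_det A).mpr h).unit

lemma glOf_coe {A : Matrix (Fin 2) (Fin 2) R} (h : IsUnit A.det) :
    ((glOf h : Matrix.GeneralLinearGroup (Fin 2) R) : Matrix (Fin 2) (Fin 2) R) = A :=
  IsUnit.unit_spec _

end Aux

section Padic

variable {p : ℕ} [Fact p.Prime]

lemma dvd_iff_toZMod_eq_zero (z : ℤ_[p]) : (p : ℤ_[p]) ∣ z ↔ PadicInt.toZMod z = 0 := by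
  constructor
  · intro h
    rw [← RingHom.mem_ker, PadicInt.ker_toZMod, PadicInt.maximalIdeal_eq_span_p,
      Ideal.mem_span_singleton]
    exact h
  · intro h
    rw [← RingHom.mem_ker, PadicInt.ker_toZMod, PadicInt.maximalIdeal_eq_span_p,
      Ideal.mem_span_singleton] at h
    exact h

lemma pow_dvd_iff_toZModPow_eq_zero (n : ℕ) (z : ℤ_[p]) :
    (p : ℤ_[p]) ^ n ∣ z ↔ PadicInt.toZModPow n z = 0 := by
  rw [← RingHom.mem_ker, PadicInt.ker_toZModPow, Ideal.mem_span_singleton]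

lemma isUnit_iff_not_dvd (z : ℤ_[p]) : IsUnit z ↔ ¬(p : ℤ_[p]) ∣ z := by
  rw [← PadicInt.norm_lt_one_iff_dvd, ← PadicInt.not_isUnit_iff, not_not]

lemma p_ne_zero' : (p : ℤ_[p]) ≠ 0 := PadicInt.prime_p.ne_zero

lemma nat_dvd_of_dvd {n : ℕ} (h : (p : ℤ_[p]) ∣ (n : ℤ_[p])) : p ∣ n := by
  rw [dvd_iff_toZMod_eq_zero, map_natCast, ZMod.natCast_eq_zero_iff] at h
  exact h

lemma not_dvd_two (hp : p ≠ 2) : ¬(p : ℤ_[p]) ∣ (2 : ℤ_[p]) := by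
  intro h
  have h2 : ((2 : ℕ) : ℤ_[p]) = (2 : ℤ_[p]) := by norm_num
  rw [← h2] at h
  exact hp ((Nat.prime_dvd_prime_iff_eq (Fact.out) Nat.prime_two).mp (nat_dvd_of_dvd h))

lemma not_dvd_three (hp : p ≠ 3) : ¬(p : ℤ_[p]) ∣ (3 : ℤ_[p]) := by
  intro h
  have h2 : ((3 : ℕ) : ℤ_[p]) = (3 : ℤ_[p]) := by norm_num
  rw [← h2] at h
  exact hp ((Nat.prime_dvd_prime_iff_eq (Fact.out) Nat.prime_three).mp (nat_dvd_of_dvd h))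

lemma not_dvd_four (hp : p ≠ 2) : ¬(p : ℤ_[p]) ∣ (4 : ℤ_[p]) := by
  intro h
  have h4 : (4 : ℤ_[p]) = 2 * 2 := by norm_num
  rw [h4] at h
  rcases (PadicInt.prime_p.dvd_mul).mp h with h' | h' <;> exact not_dvd_two hp h'

lemma not_dvd_27 (hp : p ≠ 3) : ¬(p : ℤ_[p]) ∣ (27 : ℤ_[p]) := by
  intro h
  have h27 : (27 : ℤ_[p]) = 3 * (3 * 3) := by norm_num
  rw [h27] at h
  rcases (PadicInt.prime_p.dvd_mul).mp h with h' | h'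
  · exact not_dvd_three hp h'
  rcases (PadicInt.prime_p.dvd_mul).mp h' with h'' | h'' <;> exact not_dvd_three hp h''

lemma toZModPow_natCast_val (a : ZMod (p ^ 2)) :
    PadicInt.toZModPow 2 ((a.val : ℤ_[p])) = a := by
  haveI : NeZero (p ^ 2) := ⟨pow_ne_zero 2 (Fact.out : p.Prime).ne_zero⟩
  rw [map_natCast]
  exact ZMod.natCast_rightInverse a

lemma inPR_iff (z : ℤ_[p]) : InPR p (PadicInt.toZModPow 2 z) ↔ (p : ℤ_[p]) ∣ z := by
  constructor
  · rintro ⟨y, hy⟩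
    have h2 : PadicInt.toZModPow 2 (z - (p : ℤ_[p]) * (y.val : ℤ_[p])) = 0 := by
      rw [map_sub, map_mul, map_natCast, toZModPow_natCast_val, hy]
      ring
    rw [← pow_dvd_iff_toZModPow_eq_zero] at h2
    obtain ⟨t, ht⟩ := h2
    exact ⟨(y.val : ℤ_[p]) + p * t, by linear_combination ht⟩
  · rintro ⟨c, hc⟩
    exact ⟨PadicInt.toZModPow 2 c, by rw [hc, map_mul, map_natCast]⟩

lemma isUnit_toZModPow_iff (z : ℤ_[p]) : IsUnit (PadicInt.toZModPow 2 z) ↔ IsUnit z := by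
  constructor
  · intro h
    rw [isUnit_iff_not_dvd]
    intro hdvd
    obtain ⟨c, hc⟩ := hdvd
    rw [hc, map_mul, map_natCast] at h
    have hpu : IsUnit ((p : ZMod (p ^ 2))) := isUnit_of_mul_isUnit_left h
    have hp2 : ((p : ZMod (p ^ 2))) * ((p : ZMod (p ^ 2))) = 0 := by
      have : ((p ^ 2 : ℕ) : ZMod (p ^ 2)) = 0 := ZMod.natCast_self _
      push_cast at this
      linear_combination this
    haveI : Fact (1 < p ^ 2) :=
      ⟨by nlinarith [(Fact.out : p.Prime).two_le]⟩
    have : IsUnit (0 : ZMod (p ^ 2)) := by rw [← hp2]; exact hpu.mul hpu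
    rw [isUnit_zero_iff] at this
    exact zero_ne_one this
  · exact fun h => h.map _

lemma eq_p_mul_unit {z : ℤ_[p]} (h1 : (p : ℤ_[p]) ∣ z) (h2 : ¬(p : ℤ_[p]) ^ 2 ∣ z) :
    ∃ c : ℤ_[p], z = (p : ℤ_[p]) * c ∧ ¬(p : ℤ_[p]) ∣ c := by
  obtain ⟨c, hc⟩ := h1
  exact ⟨c, hc, fun ⟨t, ht⟩ => h2 ⟨t, by rw [hc, ht]; ring⟩⟩

lemma not_p_sq_dvd_toZModPow {z : ℤ_[p]} (h : PadicInt.toZModPow 2 z ≠ 0) :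
    ¬(p : ℤ_[p]) ^ 2 ∣ z := by
  rw [pow_dvd_iff_toZModPow_eq_zero]
  exact h

end Padic

section Orbit

variable {p : ℕ} [Fact p.Prime]

/-- Reduction `GL₂(ℤ_p) →* GL₂(ℤ/p²ℤ)`. -/
def redGL2 (p : ℕ) [Fact p.Prime] :
    Matrix.GeneralLinearGroup (Fin 2) ℤ_[p] →* Matrix.GeneralLinearGroup (Fin 2) (ZMod (p ^ 2)) :=
  Units.map (RingHom.toMonoidHom ((PadicInt.toZModPow 2).mapMatrix))

lemma redGL2_entries (g : Matrix.GeneralLinearGroup (Fin 2) ℤ_[p]) (i j : Fin 2) :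
    PadicInt.toZModPow 2 ((g : Matrix (Fin 2) (Fin 2) ℤ_[p]) i j)
      = ((redGL2 p g : Matrix.GeneralLinearGroup (Fin 2) (ZMod (p ^ 2))) :
          Matrix (Fin 2) (Fin 2) (ZMod (p ^ 2))) i j := by
  simp [redGL2, RingHom.mapMatrix_apply, Matrix.map_apply]

lemma red_gAct2 (g : Matrix.GeneralLinearGroup (Fin 2) ℤ_[p]) (x : V ℤ_[p]) :
    (fun i => PadicInt.toZModPow 2 (gAct g x i)) = gAct (redGL2 p g)
      (fun i => PadicInt.toZModPow 2 (x i)) :=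
  red_gAct _ g (redGL2 p g) (redGL2_entries g) x

/-- Lift a matrix over `ZMod (p^2)` with invertible determinant to `GL₂(ℤ_p)`. -/
lemma lift_gl2 (g : Matrix.GeneralLinearGroup (Fin 2) (ZMod (p ^ 2))) :
    ∃ G : Matrix.GeneralLinearGroup (Fin 2) ℤ_[p], redGL2 p G = g := by
  set A : Matrix (Fin 2) (Fin 2) ℤ_[p] := Matrix.of fun i j =>
    ((((g : Matrix (Fin 2) (Fin 2) (ZMod (p ^ 2))) i j).val : ℤ_[p])) with hA
  have hent : ∀ i j, PadicInt.toZModPow 2 (A i j)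
      = (g : Matrix (Fin 2) (Fin 2) (ZMod (p ^ 2))) i j := by
    intro i j
    simp only [hA, Matrix.of_apply]
    exact toZModPow_natCast_val _
  have hmap : A.map (PadicInt.toZModPow 2) = (g : Matrix (Fin 2) (Fin 2) (ZMod (p ^ 2))) := by
    ext i j
    exact hent i j
  have hdet : IsUnit A.det := by
    rw [← isUnit_toZModPow_iff, RingHom.map_det, RingHom.mapMatrix_apply, hmap]
    exact (Matrix.isUnit_iff_isUnit_det _).mp (Units.isUnit g)
  refine ⟨glOf hdet, ?_⟩
  apply Units.ext
  show ((PadicInt.toZModPow 2).mapMatrix) _ = _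
  rw [RingHom.mapMatrix_apply, glOf_coe, hmap]

/-- Lift a nonsingular matrix over `ZMod p` to `GL₂(ℤ_p)` with prescribed reduction of entries. -/
lemma lift_glp (A0 : Matrix (Fin 2) (Fin 2) (ZMod p)) (h : IsUnit A0.det) :
    ∃ G : Matrix.GeneralLinearGroup (Fin 2) ℤ_[p],
      ∀ i j, PadicInt.toZMod ((G : Matrix (Fin 2) (Fin 2) ℤ_[p]) i j) = A0 i j := by
  set A : Matrix (Fin 2) (Fin 2) ℤ_[p] := Matrix.of fun i j => (((A0 i j).val : ℤ_[p])) with hA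
  have hent : ∀ i j, PadicInt.toZMod (A i j) = A0 i j := by
    intro i j
    simp only [hA, Matrix.of_apply, map_natCast]
    exact ZMod.natCast_rightInverse _
  have hmap : A.map PadicInt.toZMod = A0 := by ext i j; exact hent i j
  have hdet : IsUnit A.det := by
    rw [isUnit_iff_not_dvd, dvd_iff_toZMod_eq_zero, RingHom.map_det, RingHom.mapMatrix_apply, hmap]
    intro h0
    rw [h0] at h
    exact (by simpa using h : IsUnit (0 : ZMod p)).ne_zero rfl
  refine ⟨glOf hdet, fun i j => ?_⟩
  rw [glOf_coe]
  exact hent i j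

/-- Reduction mod `p` of the action. -/
def redGLp (p : ℕ) [Fact p.Prime] :
    Matrix.GeneralLinearGroup (Fin 2) ℤ_[p] →* Matrix.GeneralLinearGroup (Fin 2) (ZMod p) :=
  Units.map (RingHom.toMonoidHom ((PadicInt.toZMod).mapMatrix))

lemma redGLp_entries (g : Matrix.GeneralLinearGroup (Fin 2) ℤ_[p]) (i j : Fin 2) :
    PadicInt.toZMod ((g : Matrix (Fin 2) (Fin 2) ℤ_[p]) i j)
      = ((redGLp p g : Matrix.GeneralLinearGroup (Fin 2) (ZMod p)) :
          Matrix (Fin 2) (Fin 2) (ZMod p)) i j := by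
  simp [redGLp, RingHom.mapMatrix_apply, Matrix.map_apply]

lemma red_gActp (g : Matrix.GeneralLinearGroup (Fin 2) ℤ_[p]) (x : V ℤ_[p]) :
    (fun i => PadicInt.toZMod (gAct g x i)) = gAct (redGLp p g)
      (fun i => PadicInt.toZMod (x i)) :=
  red_gAct _ g (redGLp p g) (redGLp_entries g) x

/-- If some `ℤ_p`-translate of `x` reduces into `S` mod `p²` then `x mod p²` is in the orbit. -/
lemma mem_orbit_of (G : Matrix.GeneralLinearGroup (Fin 2) ℤ_[p]) (x : V ℤ_[p])
    (S : Set (V (ZMod (p ^ 2))))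
    (hz : (fun i => PadicInt.toZModPow 2 (gAct G x i)) ∈ S) :
    (fun i => PadicInt.toZModPow 2 (x i)) ∈ GOrbit S := by
  refine ⟨(redGL2 p G)⁻¹, (fun i => PadicInt.toZModPow 2 (gAct G x i)), hz, ?_⟩
  have hx : x = gAct G⁻¹ (gAct G x) := (gAct_cancel' G x).symm
  conv_lhs => rw [hx]
  rw [red_gAct2, map_inv]

/-- Transfer divisibility of the discriminant along an orbit membership mod `p²`. -/
lemma orbit_lift {S : Set (V (ZMod (p ^ 2)))} (x : V ℤ_[p])
    (hx : (fun i => PadicInt.toZModPow 2 (x i)) ∈ GOrbit S) :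
    ∃ y : V ℤ_[p], (fun i => PadicInt.toZModPow 2 (y i)) ∈ S ∧
      ∀ z : ℤ_[p], (z ∣ P x ↔ z ∣ P y) := by
  obtain ⟨g, a, haS, hxa⟩ := hx
  obtain ⟨G, hG⟩ := lift_gl2 g
  refine ⟨gAct G⁻¹ x, ?_, ?_⟩
  · rw [red_gAct2, map_inv, hG, hxa, ← gAct_mul, inv_mul_cancel, gAct_one]
    exact haS
  · intro z
    have hxy : x = gAct G (gAct G⁻¹ x) := (gAct_cancel G x).symm
    have hP : P x = ((G : Matrix (Fin 2) (Fin 2) ℤ_[p]) 0 0 * (G : Matrix (Fin 2) (Fin 2) ℤ_[p]) 1 1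
        - (G : Matrix (Fin 2) (Fin 2) ℤ_[p]) 0 1 * (G : Matrix (Fin 2) (Fin 2) ℤ_[p]) 1 0) ^ 2
          * P (gAct G⁻¹ x) := by
      conv_lhs => rw [hxy]
      exact P_gAct G _
    have hu : IsUnit (((G : Matrix (Fin 2) (Fin 2) ℤ_[p]) 0 0
        * (G : Matrix (Fin 2) (Fin 2) ℤ_[p]) 1 1
        - (G : Matrix (Fin 2) (Fin 2) ℤ_[p]) 0 1 * (G : Matrix (Fin 2) (Fin 2) ℤ_[p]) 1 0) ^ 2) := by
      have : IsUnit (G : Matrix (Fin 2) (Fin 2) ℤ_[p]).det := (Matrix.isUnit_iff_isUnit_det _).mp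
        (Units.isUnit G)
      rw [Matrix.det_fin_two] at this
      exact this.pow 2
    rw [hP]
    exact IsUnit.dvd_mul_left hu

end Orbit

section Valuation

variable {p : ℕ} [Fact p.Prime]

lemma unit_not_dvd {z : ℤ_[p]} (h : IsUnit z) : ¬(p : ℤ_[p]) ∣ z :=
  (isUnit_iff_not_dvd z).mp h

lemma val_121max (hp2 : p ≠ 2) {y : V ℤ_[p]} (h0 : (p : ℤ_[p]) ^ 2 ∣ y 0)
    (h1 : IsUnit (y 1)) (h2 : (p : ℤ_[p]) ∣ y 2) (h3 : (p : ℤ_[p]) ∣ y 3)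
    (h3' : ¬(p : ℤ_[p]) ^ 2 ∣ y 3) :
    (p : ℤ_[p]) ∣ P y ∧ ¬(p : ℤ_[p]) ^ 2 ∣ P y := by
  obtain ⟨c0, e0⟩ := h0
  obtain ⟨c2, e2⟩ := h2
  obtain ⟨c3, e3, hc3⟩ := eq_p_mul_unit h3 h3'
  have hP : P y = (p : ℤ_[p]) * ((p : ℤ_[p]) * (y 1) ^ 2 * c2 ^ 2 + 18 * (p : ℤ_[p]) ^ 3 * c0 * (y 1) * c2 * c3
      - 4 * (p : ℤ_[p]) ^ 4 * c0 * c2 ^ 3 - 4 * (y 1) ^ 3 * c3 - 27 * (p : ℤ_[p]) ^ 5 * c0 ^ 2 * c3 ^ 2) := by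
    simp only [P]; rw [e0, e2, e3]; ring
  refine ⟨⟨_, hP⟩, ?_⟩
  rintro ⟨t, ht⟩
  have hA : (p : ℤ_[p]) * (y 1) ^ 2 * c2 ^ 2 + 18 * (p : ℤ_[p]) ^ 3 * c0 * (y 1) * c2 * c3
      - 4 * (p : ℤ_[p]) ^ 4 * c0 * c2 ^ 3 - 4 * (y 1) ^ 3 * c3 - 27 * (p : ℤ_[p]) ^ 5 * c0 ^ 2 * c3 ^ 2 = (p : ℤ_[p]) * t := by
    apply mul_left_cancel₀ (p_ne_zero' (p := p))
    rw [← hP, ht]; ring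
  have h4 : (p : ℤ_[p]) ∣ 4 * ((y 1) ^ 3 * c3) :=
    ⟨(y 1) ^ 2 * c2 ^ 2 + 18 * (p : ℤ_[p]) ^ 2 * c0 * (y 1) * c2 * c3 - 4 * (p : ℤ_[p]) ^ 3 * c0 * c2 ^ 3
      - 27 * (p : ℤ_[p]) ^ 4 * c0 ^ 2 * c3 ^ 2 - t, by linear_combination -hA⟩
  rcases PadicInt.prime_p.dvd_mul.mp h4 with h' | h'
  · exact not_dvd_four hp2 h'
  rcases PadicInt.prime_p.dvd_mul.mp h' with h'' | h''
  · exact unit_not_dvd (h1.pow 3) h''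
  · exact hc3 h''

lemma val_121s {y : V ℤ_[p]} (h0 : (p : ℤ_[p]) ^ 2 ∣ y 0) (h2 : (p : ℤ_[p]) ∣ y 2)
    (h3 : (p : ℤ_[p]) ^ 2 ∣ y 3) : (p : ℤ_[p]) ^ 2 ∣ P y := by
  obtain ⟨c0, e0⟩ := h0
  obtain ⟨c2, e2⟩ := h2
  obtain ⟨c3, e3⟩ := h3
  exact ⟨(y 1) ^ 2 * c2 ^ 2 + 18 * (p : ℤ_[p]) ^ 3 * c0 * (y 1) * c2 * c3 - 4 * (p : ℤ_[p]) ^ 3 * c0 * c2 ^ 3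
    - 4 * (y 1) ^ 3 * c3 - 27 * (p : ℤ_[p]) ^ 6 * c0 ^ 2 * c3 ^ 2, by simp only [P]; rw [e0, e2, e3]; ring⟩

lemma val_13max (hp3 : p ≠ 3) {y : V ℤ_[p]} (h0 : IsUnit (y 0)) (h1 : (p : ℤ_[p]) ∣ y 1)
    (h2 : (p : ℤ_[p]) ∣ y 2) (h3 : (p : ℤ_[p]) ∣ y 3) (h3' : ¬(p : ℤ_[p]) ^ 2 ∣ y 3) :
    (p : ℤ_[p]) ^ 2 ∣ P y ∧ ¬(p : ℤ_[p]) ^ 3 ∣ P y := by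
  obtain ⟨c1, e1⟩ := h1
  obtain ⟨c2, e2⟩ := h2
  obtain ⟨c3, e3, hc3⟩ := eq_p_mul_unit h3 h3'
  have hP : P y = (p : ℤ_[p]) ^ 2 * ((p : ℤ_[p]) ^ 2 * c1 ^ 2 * c2 ^ 2 + 18 * (p : ℤ_[p]) * (y 0) * c1 * c2 * c3
      - 4 * (p : ℤ_[p]) * (y 0) * c2 ^ 3 - 4 * (p : ℤ_[p]) ^ 2 * c1 ^ 3 * c3 - 27 * (y 0) ^ 2 * c3 ^ 2) := by
    simp only [P]; rw [e1, e2, e3]; ring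
  refine ⟨⟨_, hP⟩, ?_⟩
  rintro ⟨t, ht⟩
  have hA : (p : ℤ_[p]) ^ 2 * c1 ^ 2 * c2 ^ 2 + 18 * (p : ℤ_[p]) * (y 0) * c1 * c2 * c3
      - 4 * (p : ℤ_[p]) * (y 0) * c2 ^ 3 - 4 * (p : ℤ_[p]) ^ 2 * c1 ^ 3 * c3 - 27 * (y 0) ^ 2 * c3 ^ 2 = (p : ℤ_[p]) * t := by
    apply mul_left_cancel₀ (pow_ne_zero 2 (p_ne_zero' (p := p)))
    rw [← hP, ht]; ring
  have h27 : (p : ℤ_[p]) ∣ 27 * ((y 0) ^ 2 * c3 ^ 2) :=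
    ⟨(p : ℤ_[p]) * c1 ^ 2 * c2 ^ 2 + 18 * (y 0) * c1 * c2 * c3 - 4 * (y 0) * c2 ^ 3
      - 4 * (p : ℤ_[p]) * c1 ^ 3 * c3 - t, by linear_combination -hA⟩
  rcases PadicInt.prime_p.dvd_mul.mp h27 with h' | h'
  · exact not_dvd_27 hp3 h'
  rcases PadicInt.prime_p.dvd_mul.mp h' with h'' | h''
  · exact unit_not_dvd (h0.pow 2) h''
  · exact hc3 (PadicInt.prime_p.dvd_of_dvd_pow h'')

lemma val_13s (hp2 : p ≠ 2) {y : V ℤ_[p]} (h0 : IsUnit (y 0)) (h1 : (p : ℤ_[p]) ∣ y 1)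
    (h2 : (p : ℤ_[p]) ∣ y 2) (h2' : ¬(p : ℤ_[p]) ^ 2 ∣ y 2) (h3 : (p : ℤ_[p]) ^ 2 ∣ y 3) :
    (p : ℤ_[p]) ^ 3 ∣ P y ∧ ¬(p : ℤ_[p]) ^ 4 ∣ P y := by
  obtain ⟨c1, e1⟩ := h1
  obtain ⟨c2, e2, hc2⟩ := eq_p_mul_unit h2 h2'
  obtain ⟨c3, e3⟩ := h3
  have hP : P y = (p : ℤ_[p]) ^ 3 * ((p : ℤ_[p]) * c1 ^ 2 * c2 ^ 2 + 18 * (p : ℤ_[p]) * (y 0) * c1 * c2 * c3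
      - 4 * (y 0) * c2 ^ 3 - 4 * (p : ℤ_[p]) ^ 2 * c1 ^ 3 * c3 - 27 * (p : ℤ_[p]) * (y 0) ^ 2 * c3 ^ 2) := by
    simp only [P]; rw [e1, e2, e3]; ring
  refine ⟨⟨_, hP⟩, ?_⟩
  rintro ⟨t, ht⟩
  have hA : (p : ℤ_[p]) * c1 ^ 2 * c2 ^ 2 + 18 * (p : ℤ_[p]) * (y 0) * c1 * c2 * c3
      - 4 * (y 0) * c2 ^ 3 - 4 * (p : ℤ_[p]) ^ 2 * c1 ^ 3 * c3 - 27 * (p : ℤ_[p]) * (y 0) ^ 2 * c3 ^ 2 = (p : ℤ_[p]) * t := by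
    apply mul_left_cancel₀ (pow_ne_zero 3 (p_ne_zero' (p := p)))
    rw [← hP, ht]; ring
  have h4 : (p : ℤ_[p]) ∣ 4 * ((y 0) * c2 ^ 3) :=
    ⟨c1 ^ 2 * c2 ^ 2 + 18 * (y 0) * c1 * c2 * c3 - 4 * (p : ℤ_[p]) * c1 ^ 3 * c3
      - 27 * (y 0) ^ 2 * c3 ^ 2 - t, by linear_combination -hA⟩
  rcases PadicInt.prime_p.dvd_mul.mp h4 with h' | h'
  · exact not_dvd_four hp2 h'
  rcases PadicInt.prime_p.dvd_mul.mp h' with h'' | h''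
  · exact unit_not_dvd h0 h''
  · exact hc2 (PadicInt.prime_p.dvd_of_dvd_pow h'')

lemma val_13ss {y : V ℤ_[p]} (h1 : (p : ℤ_[p]) ∣ y 1) (h2 : (p : ℤ_[p]) ^ 2 ∣ y 2)
    (h3 : (p : ℤ_[p]) ^ 2 ∣ y 3) : (p : ℤ_[p]) ^ 4 ∣ P y := by
  obtain ⟨c1, e1⟩ := h1
  obtain ⟨c2, e2⟩ := h2
  obtain ⟨c3, e3⟩ := h3
  exact ⟨(p : ℤ_[p]) ^ 2 * c1 ^ 2 * c2 ^ 2 + 18 * (p : ℤ_[p]) * (y 0) * c1 * c2 * c3 - 4 * (p : ℤ_[p]) ^ 2 * (y 0) * c2 ^ 3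
    - 4 * (p : ℤ_[p]) * c1 ^ 3 * c3 - 27 * (y 0) ^ 2 * c3 ^ 2, by simp only [P]; rw [e1, e2, e3]; ring⟩

end Valuation

section Forward

variable {p : ℕ} [Fact p.Prime]

lemma forward_121max (hp2 : p ≠ 2) (x : V ℤ_[p])
    (hx : (fun i => PadicInt.toZModPow 2 (x i)) ∈ V121max p) :
    (p : ℤ_[p]) ∣ P x ∧ ¬(p : ℤ_[p]) ^ 2 ∣ P x := by
  obtain ⟨y, hyD, hdvd⟩ := orbit_lift x hx
  obtain ⟨ha0, ha1, ha2, ha3⟩ := hyD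
  have h0 : (p : ℤ_[p]) ^ 2 ∣ y 0 := (pow_dvd_iff_toZModPow_eq_zero 2 _).mpr ha0
  have h1 : IsUnit (y 1) := (isUnit_toZModPow_iff _).mp ha1
  have h2 : (p : ℤ_[p]) ∣ y 2 := (inPR_iff _).mp ha2
  have h3 : (p : ℤ_[p]) ∣ y 3 := (inPR_iff _).mp ha3.1
  have h3' : ¬(p : ℤ_[p]) ^ 2 ∣ y 3 := not_p_sq_dvd_toZModPow ha3.2
  obtain ⟨d1, d2⟩ := val_121max hp2 h0 h1 h2 h3 h3'
  exact ⟨(hdvd _).mpr d1, fun h => d2 ((hdvd _).mp h)⟩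

lemma forward_121s (x : V ℤ_[p])
    (hx : (fun i => PadicInt.toZModPow 2 (x i)) ∈ V121s p) :
    (p : ℤ_[p]) ^ 2 ∣ P x := by
  obtain ⟨y, hyD, hdvd⟩ := orbit_lift x hx
  obtain ⟨ha0, ha1, ha2, ha3⟩ := hyD
  have h0 : (p : ℤ_[p]) ^ 2 ∣ y 0 := (pow_dvd_iff_toZModPow_eq_zero 2 _).mpr ha0
  have h2 : (p : ℤ_[p]) ∣ y 2 := (inPR_iff _).mp ha2
  have h3 : (p : ℤ_[p]) ^ 2 ∣ y 3 := (pow_dvd_iff_toZModPow_eq_zero 2 _).mpr ha3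
  exact (hdvd _).mpr (val_121s h0 h2 h3)

lemma forward_13max (hp3 : p ≠ 3) (x : V ℤ_[p])
    (hx : (fun i => PadicInt.toZModPow 2 (x i)) ∈ V13max p) :
    (p : ℤ_[p]) ^ 2 ∣ P x ∧ ¬(p : ℤ_[p]) ^ 3 ∣ P x := by
  obtain ⟨y, hyD, hdvd⟩ := orbit_lift x hx
  obtain ⟨ha0, ha1, ha2, ha3⟩ := hyD
  have h0 : IsUnit (y 0) := (isUnit_toZModPow_iff _).mp ha0
  have h1 : (p : ℤ_[p]) ∣ y 1 := (inPR_iff _).mp ha1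
  have h2 : (p : ℤ_[p]) ∣ y 2 := (inPR_iff _).mp ha2
  have h3 : (p : ℤ_[p]) ∣ y 3 := (inPR_iff _).mp ha3.1
  have h3' : ¬(p : ℤ_[p]) ^ 2 ∣ y 3 := not_p_sq_dvd_toZModPow ha3.2
  obtain ⟨d1, d2⟩ := val_13max hp3 h0 h1 h2 h3 h3'
  exact ⟨(hdvd _).mpr d1, fun h => d2 ((hdvd _).mp h)⟩

lemma forward_13s (hp2 : p ≠ 2) (x : V ℤ_[p])
    (hx : (fun i => PadicInt.toZModPow 2 (x i)) ∈ V13s p) :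
    (p : ℤ_[p]) ^ 3 ∣ P x ∧ ¬(p : ℤ_[p]) ^ 4 ∣ P x := by
  obtain ⟨y, hyD, hdvd⟩ := orbit_lift x hx
  obtain ⟨ha0, ha1, ha2, ha3⟩ := hyD
  have h0 : IsUnit (y 0) := (isUnit_toZModPow_iff _).mp ha0
  have h1 : (p : ℤ_[p]) ∣ y 1 := (inPR_iff _).mp ha1
  have h2 : (p : ℤ_[p]) ∣ y 2 := (inPR_iff _).mp ha2.1
  have h2' : ¬(p : ℤ_[p]) ^ 2 ∣ y 2 := not_p_sq_dvd_toZModPow ha2.2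
  have h3 : (p : ℤ_[p]) ^ 2 ∣ y 3 := (pow_dvd_iff_toZModPow_eq_zero 2 _).mpr ha3
  obtain ⟨d1, d2⟩ := val_13s hp2 h0 h1 h2 h2' h3
  exact ⟨(hdvd _).mpr d1, fun h => d2 ((hdvd _).mp h)⟩

lemma forward_13ss (x : V ℤ_[p])
    (hx : (fun i => PadicInt.toZModPow 2 (x i)) ∈ V13ss p) :
    (p : ℤ_[p]) ^ 4 ∣ P x := by
  obtain ⟨y, hyD, hdvd⟩ := orbit_lift x hx
  obtain ⟨ha0, ha1, ha2, ha3⟩ := hyD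
  have h1 : (p : ℤ_[p]) ∣ y 1 := (inPR_iff _).mp ha1
  have h2 : (p : ℤ_[p]) ^ 2 ∣ y 2 := (pow_dvd_iff_toZModPow_eq_zero 2 _).mpr ha2
  have h3 : (p : ℤ_[p]) ^ 2 ∣ y 3 := (pow_dvd_iff_toZModPow_eq_zero 2 _).mpr ha3
  exact (hdvd _).mpr (val_13ss h1 h2 h3)

end Forward

section Field

variable {K : Type*} [Field K]

lemma delta_ne_zero {l m : K × K} (hl : l ≠ 0) (hm : m ≠ 0) (hnp : ¬Proportional l m) :
    l.1 * m.2 - l.2 * m.1 ≠ 0 := by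
  intro h
  apply hnp
  by_cases hl1 : l.1 ≠ 0
  · refine ⟨m.1 / l.1, ?_, ?_⟩
    · intro ht
      apply hm
      have hm1 : m.1 = 0 := by
        field_simp at ht
        simpa using ht
      have hm2 : m.2 = 0 := by
        have : l.1 * m.2 = 0 := by rw [sub_eq_zero] at h; rw [h, hm1]; ring
        rcases mul_eq_zero.mp this with h' | h'
        · exact absurd h' hl1
        · exact h'
      exact Prod.ext hm1 hm2
    · refine Prod.ext ?_ ?_
      · show m.1 = m.1 / l.1 * l.1
        field_simp
      · show m.2 = m.1 / l.1 * l.2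
        field_simp
        rw [sub_eq_zero] at h
        linear_combination h
  · push_neg at hl1
    have hl2 : l.2 ≠ 0 := by
      intro h2
      exact hl (Prod.ext hl1 h2)
    have hm1 : m.1 = 0 := by
      have : l.2 * m.1 = 0 := by rw [sub_eq_zero] at h; rw [← h, hl1]; ring
      rcases mul_eq_zero.mp this with h' | h'
      · exact absurd h' hl2
      · exact h'
    refine ⟨m.2 / l.2, ?_, ?_⟩
    · intro ht
      apply hm
      have hm2 : m.2 = 0 := by
        field_simp at ht
        simpa using ht
      exact Prod.ext hm1 hm2
    · refine Prod.ext ?_ ?_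
      · show m.1 = m.2 / l.2 * l.1
        rw [hm1, hl1]; ring
      · show m.2 = m.2 / l.2 * l.2
        field_simp

lemma exists_comb {l : K × K} (hl : l ≠ 0) : ∃ a b : K, a * l.1 + b * l.2 = 1 := by
  by_cases hl1 : l.1 = 0
  · have hl2 : l.2 ≠ 0 := fun h2 => hl (Prod.ext hl1 h2)
    exact ⟨0, l.2⁻¹, by field_simp; ring⟩
  · exact ⟨l.1⁻¹, 0, by field_simp; ring⟩

end Field

section Cover

variable {p : ℕ} [Fact p.Prime]

lemma cover13 (x : V ℤ_[p]) (h13 : IsType13 (fun i => PadicInt.toZMod (x i))) :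
    (fun i => PadicInt.toZModPow 2 (x i)) ∈ V13max p ∨
    (fun i => PadicInt.toZModPow 2 (x i)) ∈ V13s p ∨
    (fun i => PadicInt.toZModPow 2 (x i)) ∈ V13ss p := by
  obtain ⟨c, l, hc, hl, heq⟩ := h13
  obtain ⟨a, b, hab⟩ := exists_comb hl
  set A0 : Matrix (Fin 2) (Fin 2) (ZMod p) := !![a, b; -l.2, l.1] with hA0
  have hdet : IsUnit A0.det := by
    have : A0.det = 1 := by
      rw [hA0, Matrix.det_fin_two_of]
      linear_combination hab
    rw [this]; exact isUnit_one
  obtain ⟨G, hGent⟩ := lift_glp A0 hdet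
  set H := redGLp p G with hH
  have e00 : (H : Matrix (Fin 2) (Fin 2) (ZMod p)) 0 0 = a := by
    rw [← redGLp_entries, hGent]; simp [hA0]
  have e01 : (H : Matrix (Fin 2) (Fin 2) (ZMod p)) 0 1 = b := by
    rw [← redGLp_entries, hGent]; simp [hA0]
  have e10 : (H : Matrix (Fin 2) (Fin 2) (ZMod p)) 1 0 = -l.2 := by
    rw [← redGLp_entries, hGent]; simp [hA0]
  have e11 : (H : Matrix (Fin 2) (Fin 2) (ZMod p)) 1 1 = l.1 := by
    rw [← redGLp_entries, hGent]; simp [hA0]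
  have hd := det_data H
  rw [e00, e01, e10, e11] at hd
  have hyred : (fun i => PadicInt.toZMod (gAct G x i)) = ![c, 0, 0, 0] := by
    rw [red_gActp, heq, ← hH, gAct_eq, e00, e01, e10, e11]
    set w : V (ZMod p) := c • lin3Mul l l l with hw
    set d : ZMod p := (((Matrix.GeneralLinearGroup.det H)⁻¹ : (ZMod p)ˣ) : ZMod p) with hdd
    obtain ⟨k0, k1, k2, k3⟩ := act4_apply a b (-l.2) l.1 d w
    have b0 : w 0 = c * (l.1 * l.1 * l.1) := rfl
    have b1 : w 1 = c * (l.1 * l.1 * l.2 + l.1 * l.2 * l.1 + l.2 * l.1 * l.1) := rfl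
    have b2 : w 2 = c * (l.1 * l.2 * l.2 + l.2 * l.1 * l.2 + l.2 * l.2 * l.1) := rfl
    have b3 : w 3 = c * (l.2 * l.2 * l.2) := rfl
    have r0 : (![c, 0, 0, 0] : V (ZMod p)) 0 = c := rfl
    have r1 : (![c, 0, 0, 0] : V (ZMod p)) 1 = 0 := rfl
    have r2' : (![c, 0, 0, 0] : V (ZMod p)) 2 = 0 := rfl
    have r3 : (![c, 0, 0, 0] : V (ZMod p)) 3 = 0 := rfl
    refine V_ext ?_ ?_ ?_ ?_
    · rw [k0, b0, b1, b2, b3, r0]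
      linear_combination (c * d * (a * l.1 + b * l.2) * ((a * l.1 + b * l.2) + 1)) * hab + c * hd
    · rw [k1, b0, b1, b2, b3, r1]; ring
    · rw [k2, b0, b1, b2, b3, r2']; ring
    · rw [k3, b0, b1, b2, b3, r3]; ring
  have hy0 : IsUnit (gAct G x 0) := by
    rw [isUnit_iff_not_dvd, dvd_iff_toZMod_eq_zero]
    have := congrFun hyred 0
    rw [this]
    exact hc
  have hy1 : (p : ℤ_[p]) ∣ gAct G x 1 := by
    rw [dvd_iff_toZMod_eq_zero]; exact congrFun hyred 1
  have hy2 : (p : ℤ_[p]) ∣ gAct G x 2 := by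
    rw [dvd_iff_toZMod_eq_zero]; exact congrFun hyred 2
  have hy3 : (p : ℤ_[p]) ∣ gAct G x 3 := by
    rw [dvd_iff_toZMod_eq_zero]; exact congrFun hyred 3
  by_cases h3 : PadicInt.toZModPow 2 (gAct G x 3) = 0
  · by_cases h2 : PadicInt.toZModPow 2 (gAct G x 2) = 0
    · right; right
      exact mem_orbit_of G x _ ⟨(isUnit_toZModPow_iff _).mpr hy0, (inPR_iff _).mpr hy1, h2, h3⟩
    · right; left
      exact mem_orbit_of G x _ ⟨(isUnit_toZModPow_iff _).mpr hy0, (inPR_iff _).mpr hy1,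
        ⟨(inPR_iff _).mpr hy2, h2⟩, h3⟩
  · left
    exact mem_orbit_of G x _ ⟨(isUnit_toZModPow_iff _).mpr hy0, (inPR_iff _).mpr hy1,
      (inPR_iff _).mpr hy2, ⟨(inPR_iff _).mpr hy3, h3⟩⟩

end Cover

section Cover121

variable {p : ℕ} [Fact p.Prime]

lemma cover121 (x : V ℤ_[p]) (h121 : IsType121 (fun i => PadicInt.toZMod (x i))) :
    (fun i => PadicInt.toZModPow 2 (x i)) ∈ V121max p ∨
    (fun i => PadicInt.toZModPow 2 (x i)) ∈ V121s p := by
  obtain ⟨l, m, hl, hm, hnp, heq⟩ := h121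
  have hΔ : l.1 * m.2 - l.2 * m.1 ≠ 0 := delta_ne_zero hl hm hnp
  set A0 : Matrix (Fin 2) (Fin 2) (ZMod p) := !![m.2, -m.1; -l.2, l.1] with hA0
  have hdet : IsUnit A0.det := by
    apply isUnit_iff_ne_zero.mpr
    rw [hA0, Matrix.det_fin_two_of]
    intro h
    apply hΔ
    linear_combination h
  obtain ⟨G, hGent⟩ := lift_glp A0 hdet
  set H := redGLp p G with hH
  have e00 : (H : Matrix (Fin 2) (Fin 2) (ZMod p)) 0 0 = m.2 := by
    rw [← redGLp_entries, hGent]; simp [hA0]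
  have e01 : (H : Matrix (Fin 2) (Fin 2) (ZMod p)) 0 1 = -m.1 := by
    rw [← redGLp_entries, hGent]; simp [hA0]
  have e10 : (H : Matrix (Fin 2) (Fin 2) (ZMod p)) 1 0 = -l.2 := by
    rw [← redGLp_entries, hGent]; simp [hA0]
  have e11 : (H : Matrix (Fin 2) (Fin 2) (ZMod p)) 1 1 = l.1 := by
    rw [← redGLp_entries, hGent]; simp [hA0]
  have hd := det_data H
  rw [e00, e01, e10, e11] at hd
  have hyred : (fun i => PadicInt.toZMod (gAct G x i))
      = ![0, (l.1 * m.2 - l.2 * m.1) ^ 2, 0, 0] := by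
    rw [red_gActp, heq, ← hH, gAct_eq, e00, e01, e10, e11]
    set w : V (ZMod p) := lin3Mul l l m with hw
    set d : ZMod p := (((Matrix.GeneralLinearGroup.det H)⁻¹ : (ZMod p)ˣ) : ZMod p) with hdd
    obtain ⟨k0, k1, k2, k3⟩ := act4_apply m.2 (-m.1) (-l.2) l.1 d w
    have b0 : w 0 = l.1 * l.1 * m.1 := rfl
    have b1 : w 1 = l.1 * l.1 * m.2 + l.1 * l.2 * m.1 + l.2 * l.1 * m.1 := rfl
    have b2 : w 2 = l.1 * l.2 * m.2 + l.2 * l.1 * m.2 + l.2 * l.2 * m.1 := rfl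
    have b3 : w 3 = l.2 * l.2 * m.2 := rfl
    have r0 : (![0, (l.1 * m.2 - l.2 * m.1) ^ 2, 0, 0] : V (ZMod p)) 0 = 0 := rfl
    have r1 : (![0, (l.1 * m.2 - l.2 * m.1) ^ 2, 0, 0] : V (ZMod p)) 1
        = (l.1 * m.2 - l.2 * m.1) ^ 2 := rfl
    have r2' : (![0, (l.1 * m.2 - l.2 * m.1) ^ 2, 0, 0] : V (ZMod p)) 2 = 0 := rfl
    have r3 : (![0, (l.1 * m.2 - l.2 * m.1) ^ 2, 0, 0] : V (ZMod p)) 3 = 0 := rfl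
    refine V_ext ?_ ?_ ?_ ?_
    · rw [k0, b0, b1, b2, b3, r0]; ring
    · rw [k1, b0, b1, b2, b3, r1]
      linear_combination (l.1 * m.2 - l.2 * m.1) ^ 2 * hd
    · rw [k2, b0, b1, b2, b3, r2']; ring
    · rw [k3, b0, b1, b2, b3, r3]; ring
  have hy0 : (p : ℤ_[p]) ∣ gAct G x 0 := by
    rw [dvd_iff_toZMod_eq_zero]; exact congrFun hyred 0
  have hy1 : IsUnit (gAct G x 1) := by
    rw [isUnit_iff_not_dvd, dvd_iff_toZMod_eq_zero]
    have h' := congrFun hyred 1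
    rw [h']
    exact pow_ne_zero 2 hΔ
  have hy2 : (p : ℤ_[p]) ∣ gAct G x 2 := by
    rw [dvd_iff_toZMod_eq_zero]; exact congrFun hyred 2
  have hy3 : (p : ℤ_[p]) ∣ gAct G x 3 := by
    rw [dvd_iff_toZMod_eq_zero]; exact congrFun hyred 3
  -- the unipotent correction
  set y : V ℤ_[p] := gAct G x with hy
  obtain ⟨s, hs⟩ := hy0
  have hv : y 1 * ((hy1.unit⁻¹ : ℤ_[p]ˣ) : ℤ_[p]) = 1 := hy1.mul_val_inv
  set v : ℤ_[p] := ((hy1.unit⁻¹ : ℤ_[p]ˣ) : ℤ_[p]) with hvv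
  set t : ℤ_[p] := -((p : ℤ_[p]) * s * v) with htt
  have hdetN : IsUnit (!![(1 : ℤ_[p]), t; 0, 1]).det := by
    rw [Matrix.det_fin_two_of]
    simp
  set GN := glOf hdetN with hGN
  have f00 : (GN : Matrix (Fin 2) (Fin 2) ℤ_[p]) 0 0 = 1 := by rw [hGN, glOf_coe]; simp
  have f01 : (GN : Matrix (Fin 2) (Fin 2) ℤ_[p]) 0 1 = t := by rw [hGN, glOf_coe]; simp
  have f10 : (GN : Matrix (Fin 2) (Fin 2) ℤ_[p]) 1 0 = 0 := by rw [hGN, glOf_coe]; simp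
  have f11 : (GN : Matrix (Fin 2) (Fin 2) ℤ_[p]) 1 1 = 1 := by rw [hGN, glOf_coe]; simp
  have hdN := det_data GN
  rw [f00, f01, f10, f11] at hdN
  have hd1 : (((Matrix.GeneralLinearGroup.det GN)⁻¹ : ℤ_[p]ˣ) : ℤ_[p]) = 1 := by
    linear_combination hdN
  obtain ⟨k0, k1, k2, k3⟩ := act4_apply (1 : ℤ_[p]) t 0 1
    (((Matrix.GeneralLinearGroup.det GN)⁻¹ : ℤ_[p]ˣ) : ℤ_[p]) y
  have hz : gAct GN y = gAct (GN * G) x := by rw [gAct_mul, ← hy]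
  have hz0 : gAct GN y 0 = y 0 + t * y 1 + t ^ 2 * y 2 + t ^ 3 * y 3 := by
    rw [gAct_eq, f00, f01, f10, f11, k0, hd1]; ring
  have hz1 : gAct GN y 1 = y 1 + 2 * t * y 2 + 3 * t ^ 2 * y 3 := by
    rw [gAct_eq, f00, f01, f10, f11, k1, hd1]; ring
  have hz2 : gAct GN y 2 = y 2 + 3 * t * y 3 := by
    rw [gAct_eq, f00, f01, f10, f11, k2, hd1]; ring
  have hz3 : gAct GN y 3 = y 3 := by
    rw [gAct_eq, f00, f01, f10, f11, k3, hd1]; ring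
  have hq0 : (p : ℤ_[p]) ^ 2 ∣ gAct GN y 0 := by
    refine ⟨s ^ 2 * v ^ 2 * y 2 - (p : ℤ_[p]) * s ^ 3 * v ^ 3 * y 3, ?_⟩
    rw [hz0, hs, htt]
    linear_combination (-(p : ℤ_[p]) * s) * hv
  have hq1 : IsUnit (gAct GN y 1) := by
    rw [isUnit_iff_not_dvd]
    intro hdz
    apply unit_not_dvd hy1
    have h1' : y 1 = gAct GN y 1 - (2 * t * y 2 + 3 * t ^ 2 * y 3) := by rw [hz1]; ring
    rw [h1']
    refine dvd_sub hdz ⟨-(2 * s * v * y 2) + 3 * (p : ℤ_[p]) * s ^ 2 * v ^ 2 * y 3, ?_⟩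
    rw [htt]; ring
  have hq2 : (p : ℤ_[p]) ∣ gAct GN y 2 := by
    obtain ⟨c2, hc2⟩ := hy2
    refine ⟨c2 - 3 * s * v * y 3, ?_⟩
    rw [hz2, ← hy] at *
    rw [hc2, htt]; ring
  have hq3 : (p : ℤ_[p]) ∣ gAct GN y 3 := by rw [hz3]; exact hy3
  rw [hz] at hq0 hq1 hq2 hq3
  by_cases h3 : PadicInt.toZModPow 2 (gAct (GN * G) x 3) = 0
  · right
    exact mem_orbit_of (GN * G) x _ ⟨(pow_dvd_iff_toZModPow_eq_zero 2 _).mp hq0,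
      (isUnit_toZModPow_iff _).mpr hq1, (inPR_iff _).mpr hq2, h3⟩
  · left
    exact mem_orbit_of (GN * G) x _ ⟨(pow_dvd_iff_toZModPow_eq_zero 2 _).mp hq0,
      (isUnit_toZModPow_iff _).mpr hq1, (inPR_iff _).mpr hq2,
      ⟨(inPR_iff _).mpr hq3, h3⟩⟩

end Cover121

/-- The strata of `V(ℤ/p²ℤ)` in terms of the `p`-adic valuation of the discriminant. -/
theorem strata_via_valuation (p : ℕ) [Fact p.Prime] (x : V ℤ_[p]) :
    (p ≠ 2 → IsType121 (fun i => PadicInt.toZMod (x i)) →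
      (((fun i => PadicInt.toZModPow 2 (x i)) ∈ V121max p
          ↔ ((p : ℤ_[p]) ∣ P x ∧ ¬(p : ℤ_[p]) ^ 2 ∣ P x)) ∧
       ((fun i => PadicInt.toZModPow 2 (x i)) ∈ V121s p ↔ (p : ℤ_[p]) ^ 2 ∣ P x))) ∧
    (p ≠ 2 → p ≠ 3 → IsType13 (fun i => PadicInt.toZMod (x i)) →
      (((fun i => PadicInt.toZModPow 2 (x i)) ∈ V13max p
          ↔ ((p : ℤ_[p]) ^ 2 ∣ P x ∧ ¬(p : ℤ_[p]) ^ 3 ∣ P x)) ∧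
       ((fun i => PadicInt.toZModPow 2 (x i)) ∈ V13s p
          ↔ ((p : ℤ_[p]) ^ 3 ∣ P x ∧ ¬(p : ℤ_[p]) ^ 4 ∣ P x)) ∧
       ((fun i => PadicInt.toZModPow 2 (x i)) ∈ V13ss p ↔ (p : ℤ_[p]) ^ 4 ∣ P x))) := by
  constructor
  · intro hp2 h121
    have cov := cover121 x h121
    refine ⟨⟨forward_121max hp2 x, ?_⟩, ⟨forward_121s x, ?_⟩⟩
    · rintro ⟨hd1, hd2⟩
      rcases cov with h | h
      · exact h
      · exact absurd (forward_121s x h) hd2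
    · intro hd
      rcases cov with h | h
      · exact absurd hd (forward_121max hp2 x h).2
      · exact h
  · intro hp2 hp3 h13
    have cov := cover13 x h13
    refine ⟨⟨forward_13max hp3 x, ?_⟩, ⟨forward_13s hp2 x, ?_⟩, ⟨forward_13ss x, ?_⟩⟩
    · rintro ⟨hd1, hd2⟩
      rcases cov with h | h | h
      · exact h
      · exact absurd (forward_13s hp2 x h).1 hd2
      · exact absurd (dvd_trans (pow_dvd_pow _ (by norm_num)) (forward_13ss x h)) hd2
    · rintro ⟨hd1, hd2⟩
      rcases cov with h | h | h
      · exact absurd hd1 (forward_13max hp3 x h).2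
      · exact h
      · exact absurd (forward_13ss x h) hd2
    · intro hd
      rcases cov with h | h | h
      · exact absurd (dvd_trans (pow_dvd_pow _ (by norm_num)) hd) (forward_13max hp3 x h).2
      · exact absurd hd (forward_13s hp2 x h).2
      · exact h

end OrbitalL
end
end

section
/- Let p be a prime and let f_p : V_p → ℂ be the characteristic function of {a ∈ V(𝔽_p) : P(a) = 0}. Then its finite Fourier transform satisfies, for b ∈ V*(𝔽_p): f̂_p(b) = −p⁻³ if P*(b) ≠ 0; f̂_p(b) = p⁻² − p⁻³ if P*(b) = 0 and b ≠ 0; and f̂_p(0) = p⁻¹ + p⁻² − p⁻³. -/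
/- Common setup: the space of binary cubic forms, the twisted GL₂-action,
the dual action, discriminants, finite Fourier transforms and orbital Gauss sums. -/

noncomputable section

open scoped BigOperators

namespace OrbitalL

variable {R : Type*} [CommRing R]

/- ===== Auxiliary development for `fourier_transform_fp` ===== -/

set_option maxRecDepth 8000 in
lemma FT_classify2 : ∀ a : V (ZMod 2), P a = 0 →
    (∃ t m1 m2 : ZMod 2, a = lin3Mul (1, t) (1, t) (m1, m2)) ∨
    (∃ m1 m2 : ZMod 2, a = lin3Mul (0, 1) (0, 1) (m1, m2)) := by decide

set_option maxRecDepth 8000 in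
lemma FT_classify3 : ∀ a : V (ZMod 3), P a = 0 →
    (∃ t m1 m2 : ZMod 3, a = lin3Mul (1, t) (1, t) (m1, m2)) ∨
    (∃ m1 m2 : ZMod 3, a = lin3Mul (0, 1) (0, 1) (m1, m2)) := by decide

section EChar

lemma eN_eq_pow (N : ℕ) (r : ZMod N) :
    eN N r = Complex.exp (2 * Real.pi * Complex.I / (N : ℂ)) ^ r.val := by
  rw [eN, ← Complex.exp_nat_mul]
  ring_nf

lemma zeta_pow_N (N : ℕ) (hN : N ≠ 0) :
    Complex.exp (2 * Real.pi * Complex.I / (N : ℂ)) ^ N = 1 := by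
  rw [← Complex.exp_nat_mul]
  have h : (N : ℂ) ≠ 0 := Nat.cast_ne_zero.mpr hN
  rw [show (N : ℂ) * (2 * Real.pi * Complex.I / (N : ℂ)) = 2 * Real.pi * Complex.I by
    field_simp]
  exact Complex.exp_two_pi_mul_I

lemma zeta_pow_mod (N : ℕ) (hN : N ≠ 0) (k : ℕ) :
    Complex.exp (2 * Real.pi * Complex.I / (N : ℂ)) ^ (k % N)
      = Complex.exp (2 * Real.pi * Complex.I / (N : ℂ)) ^ k := by
  conv_rhs => rw [← Nat.mod_add_div k N]
  rw [pow_add, pow_mul, zeta_pow_N N hN, one_pow, mul_one]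

lemma eN_zero (N : ℕ) [NeZero N] : eN N 0 = 1 := by
  rw [eN_eq_pow, ZMod.val_zero, pow_zero]

lemma eN_add (N : ℕ) [NeZero N] (r s : ZMod N) : eN N (r + s) = eN N r * eN N s := by
  rw [eN_eq_pow, eN_eq_pow, eN_eq_pow, ZMod.val_add, zeta_pow_mod N (NeZero.ne N), pow_add]

lemma eN_one_ne_one (p : ℕ) [Fact p.Prime] : eN p 1 ≠ 1 := by
  have hp := (Fact.out : p.Prime)
  have h1 : (1 : ZMod p).val = 1 := ZMod.val_one p
  rw [eN_eq_pow, h1, pow_one]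
  intro h
  rw [Complex.exp_eq_one_iff] at h
  obtain ⟨n, hn⟩ := h
  have hπ : (2 * Real.pi * Complex.I : ℂ) ≠ 0 := by
    simp [Real.pi_ne_zero, Complex.I_ne_zero]
  have hpc : (p : ℂ) ≠ 0 := Nat.cast_ne_zero.mpr hp.ne_zero
  have h1c : (1 : ℂ) = n * p := by
    field_simp at hn
    rw [mul_comm] at hn
    linear_combination hn
  have h1c' : ((1 : ℤ) : ℂ) = ((n * p : ℤ) : ℂ) := by push_cast; linear_combination h1c
  have h2 : (1 : ℤ) = n * p := Int.cast_injective h1c'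
  have hdvd : (p : ℤ) ∣ 1 := ⟨n, by linarith [h2]⟩
  have hle := Int.le_of_dvd one_pos hdvd
  have := hp.two_le
  omega

lemma sum_eN_eq_zero (p : ℕ) [Fact p.Prime] : ∑ r : ZMod p, eN p r = 0 := by
  haveI : NeZero p := ⟨(Fact.out : p.Prime).ne_zero⟩
  have key : (∑ r : ZMod p, eN p r) * eN p 1 = ∑ r : ZMod p, eN p r := by
    rw [Finset.sum_mul]
    rw [← Fintype.sum_bijective (fun r : ZMod p => r + 1)
      (Equiv.addRight (1 : ZMod p)).bijective _ (fun x => eN p x) (fun r => rfl)]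
    exact Finset.sum_congr rfl fun r _ => (eN_add p r 1).symm
  have hkey := sub_eq_zero.mpr key
  rcases mul_eq_zero.mp (by linear_combination hkey :
      (∑ r : ZMod p, eN p r) * (eN p 1 - 1) = 0) with h | h
  · exact h
  · exact absurd (sub_eq_zero.mp h) (eN_one_ne_one p)

lemma sum_eN_mul (p : ℕ) [Fact p.Prime] (c : ZMod p) :
    ∑ r : ZMod p, eN p (c * r) = if c = 0 then (p : ℂ) else 0 := by
  haveI : NeZero p := ⟨(Fact.out : p.Prime).ne_zero⟩
  split_ifs with hc
  · subst hc
    simp only [zero_mul, eN_zero]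
    simp [ZMod.card]
  · have h : ∑ r : ZMod p, eN p (c * r) = ∑ r : ZMod p, eN p r :=
      Fintype.sum_bijective (fun r => c * r) (mulLeft_bijective₀ c hc) _ _ (fun r => rfl)
    rw [h, sum_eN_eq_zero]

lemma sum_pair (p : ℕ) [Fact p.Prime] (A B : ZMod p) :
    ∑ m : ZMod p × ZMod p, eN p (m.1 * A + m.2 * B)
      = if A = 0 ∧ B = 0 then ((p : ℂ))^2 else 0 := by
  haveI : NeZero p := ⟨(Fact.out : p.Prime).ne_zero⟩
  rw [Fintype.sum_prod_type]
  have h : ∀ m1 m2 : ZMod p, eN p (m1 * A + m2 * B) = eN p (A * m1) * eN p (B * m2) := by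
    intro m1 m2; rw [← eN_add]; ring_nf
  simp_rw [h, ← Finset.mul_sum, ← Finset.sum_mul, sum_eN_mul]
  by_cases hA : A = 0 <;> by_cases hB : B = 0 <;> simp [hA, hB] <;> ring

end EChar

section Lin3

variable {R : Type*} [CommRing R]

lemma lin3Mul_app (l m : R × R) :
    lin3Mul (1, l.2) (1, l.2) m
      = ![m.1, m.2 + 2*l.2*m.1, 2*l.2*m.2 + l.2^2*m.1, l.2^2*m.2] := by
  funext i; fin_cases i <;> simp [lin3Mul] <;> ring

lemma eq_lin3Mul1_iff (a : V R) (t m1 m2 : R) :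
    a = lin3Mul (1, t) (1, t) (m1, m2)
      ↔ (a 0 = m1 ∧ a 1 = m2 + 2*t*m1 ∧ a 2 = 2*t*m2 + t^2*m1 ∧ a 3 = t^2*m2) := by
  rw [show ((1 : R), t) = ((1:R), ((1:R),t).2) from rfl, lin3Mul_app ((1:R),t) (m1,m2)]
  constructor
  · intro h; exact ⟨congrFun h 0, congrFun h 1, congrFun h 2, congrFun h 3⟩
  · rintro ⟨h0, h1, h2, h3⟩; funext i; fin_cases i <;> simpa using ‹_›

lemma lin3Mul01_app (m : R × R) :
    lin3Mul ((0 : R), (1 : R)) (0, 1) m = ![0, 0, m.1, m.2] := by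
  funext i; fin_cases i <;> simp [lin3Mul]

lemma eq_lin3Mul01_iff (a : V R) (m1 m2 : R) :
    a = lin3Mul ((0:R), (1:R)) (0, 1) (m1, m2)
      ↔ (a 0 = 0 ∧ a 1 = 0 ∧ a 2 = m1 ∧ a 3 = m2) := by
  rw [lin3Mul01_app (m1, m2)]
  constructor
  · intro h; exact ⟨congrFun h 0, congrFun h 1, congrFun h 2, congrFun h 3⟩
  · rintro ⟨h0, h1, h2, h3⟩; funext i; fin_cases i <;> simpa using ‹_›

lemma P_lin3Mul_sq (l m : R × R) : P (lin3Mul l l m) = 0 := by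
  simp only [P, lin3Mul, Matrix.cons_val_zero, Matrix.cons_val_one, Matrix.head_cons,
    Matrix.cons_val_two, Matrix.tail_cons, Matrix.cons_val_three]
  ring

end Lin3

lemma FT_classify_big (p : ℕ) [Fact p.Prime] (h2 : (2 : ZMod p) ≠ 0) (h3 : (3 : ZMod p) ≠ 0)
    (a : V (ZMod p)) (h : P a = 0) :
    (∃ t m1 m2 : ZMod p, a = lin3Mul (1, t) (1, t) (m1, m2)) ∨
    (∃ m1 m2 : ZMod p, a = lin3Mul (0, 1) (0, 1) (m1, m2)) := by
  have hP : (a 1) ^ 2 * (a 2) ^ 2 + 18 * a 0 * a 1 * a 2 * a 3 - 4 * a 0 * (a 2) ^ 3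
      - 4 * (a 1) ^ 3 * a 3 - 27 * (a 0) ^ 2 * (a 3) ^ 2 = 0 := h
  by_cases h0 : a 0 = 0
  · by_cases h1 : a 1 = 0
    · right
      exact ⟨a 2, a 3, (eq_lin3Mul01_iff a _ _).mpr ⟨h0, h1, rfl, rfl⟩⟩
    · left
      have key : a 2 ^ 2 - 4 * a 1 * a 3 = 0 := by
        have h' : a 1 ^ 2 * (a 2 ^ 2 - 4 * a 1 * a 3) = 0 := by
          linear_combination hP - (18 * a 1 * a 2 * a 3 - 4 * a 2 ^ 3
            - 27 * a 0 * a 3 ^ 2) * h0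
        rcases mul_eq_zero.mp h' with h'' | h''
        · exact absurd (pow_eq_zero_iff two_ne_zero |>.mp h'') h1
        · exact h''
      have h2a1 : (2 * a 1) ≠ 0 := mul_ne_zero h2 h1
      refine ⟨a 2 * (2 * a 1)⁻¹, 0, a 1, (eq_lin3Mul1_iff a _ _ _).mpr ⟨h0, by ring, ?_, ?_⟩⟩
      · field_simp; ring
      · field_simp
        ring_nf
        linear_combination (-1) * key
  · left
    by_cases hΔ : a 1 ^ 2 - 3 * a 0 * a 2 = 0
    · have hΔ1 : 2 * a 1 ^ 3 - 9 * a 0 * a 1 * a 2 + 27 * a 0 ^ 2 * a 3 = 0 := by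
        have hsq : (2 * a 1 ^ 3 - 9 * a 0 * a 1 * a 2 + 27 * a 0 ^ 2 * a 3) ^ 2 = 0 := by
          linear_combination (4 * (a 1 ^ 2 - 3 * a 0 * a 2) ^ 2) * hΔ - 27 * a 0 ^ 2 * hP
        exact pow_eq_zero_iff two_ne_zero |>.mp hsq
      have h3a0 : (3 * a 0) ≠ 0 := mul_ne_zero h3 h0
      set c : ZMod p := a 1 * (3 * a 0)⁻¹ with hc
      refine ⟨c, a 0, a 1 - 2 * c * a 0, (eq_lin3Mul1_iff a _ _ _).mpr ⟨rfl, by ring, ?_, ?_⟩⟩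
      · rw [hc]; field_simp; ring_nf
        linear_combination (-3) * hΔ
      · rw [hc]; field_simp; ring_nf
        linear_combination hΔ1 + (-3 * a 1) * hΔ
    · have h2Δ : (2 * (a 1 ^ 2 - 3 * a 0 * a 2)) ≠ 0 := mul_ne_zero h2 hΔ
      set c : ZMod p := -((9 * a 0 * a 3 - a 1 * a 2) * (2 * (a 1 ^ 2 - 3 * a 0 * a 2))⁻¹)
        with hc
      refine ⟨c, a 0, a 1 - 2 * c * a 0, (eq_lin3Mul1_iff a _ _ _).mpr ⟨rfl, by ring, ?_, ?_⟩⟩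
      · have hA : a 1 ^ 2 - a 2 * a 0 * 3 ≠ 0 := fun h' => hΔ (by linear_combination h')
        have hB : a 1 ^ 2 - a 0 * a 2 * 3 ≠ 0 := fun h' => hΔ (by linear_combination h')
        rw [hc]; field_simp; ring_nf
        linear_combination (-9 * a 0) * hP
      · have hA : a 1 ^ 2 - a 2 * a 0 * 3 ≠ 0 := fun h' => hΔ (by linear_combination h')
        have hB : a 1 ^ 2 - a 0 * a 2 * 3 ≠ 0 := fun h' => hΔ (by linear_combination h')
        rw [hc]; field_simp; ring_nf
        linear_combination (27 * a 0 ^ 2 * a 3 - a 1 ^ 3) * hP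

lemma FT_classify (p : ℕ) [Fact p.Prime] (a : V (ZMod p)) (h : P a = 0) :
    (∃ t m1 m2 : ZMod p, a = lin3Mul (1, t) (1, t) (m1, m2)) ∨
    (∃ m1 m2 : ZMod p, a = lin3Mul (0, 1) (0, 1) (m1, m2)) := by
  have hp : p.Prime := Fact.out
  by_cases h2 : (2 : ZMod p) = 0
  · have hdvd : p ∣ 2 := by
      exact_mod_cast (ZMod.natCast_eq_zero_iff 2 p).mp (by exact_mod_cast h2)
    have hp2 : p = 2 := ((Nat.prime_dvd_prime_iff_eq hp Nat.prime_two).mp hdvd)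
    subst hp2
    exact FT_classify2 a h
  · by_cases h3 : (3 : ZMod p) = 0
    · have hdvd : p ∣ 3 := by
        exact_mod_cast (ZMod.natCast_eq_zero_iff 3 p).mp (by exact_mod_cast h3)
      have hp3 : p = 3 := ((Nat.prime_dvd_prime_iff_eq hp Nat.prime_three).mp hdvd)
      subst hp3
      exact FT_classify3 a h
    · exact FT_classify_big p h2 h3 a h

section Counting

/-- Value of the first quadratic covariant of `b` at `(1,t)`. -/
def qq1 {R : Type*} [CommRing R] (b : V R) (t : R) : R := b 0 + 2 * b 1 * t + b 2 * t ^ 2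

/-- Value of the second quadratic covariant of `b` at `(1,t)`. -/
def qq2 {R : Type*} [CommRing R] (b : V R) (t : R) : R := b 1 + 2 * b 2 * t + b 3 * t ^ 2

/-- The finite common zeros of the two quadratics attached to `b`. -/
def Zset (p : ℕ) [NeZero p] (b : V (ZMod p)) : Finset (ZMod p) :=
  Finset.univ.filter fun t => qq1 b t = 0 ∧ qq2 b t = 0

/-- The number of common projective zeros of the two quadratics attached to `b`. -/
def Ncount (p : ℕ) [NeZero p] (b : V (ZMod p)) : ℕ :=
  (Zset p b).card + (if b 2 = 0 ∧ b 3 = 0 then 1 else 0)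

lemma Ncount_zero (p : ℕ) [NeZero p] : Ncount p (0 : V (ZMod p)) = p + 1 := by
  have h : Zset p (0 : V (ZMod p)) = Finset.univ := by
    rw [Zset]
    apply Finset.filter_true_of_mem
    intro t _
    constructor <;> simp [qq1, qq2]
  simp [Ncount, h, ZMod.card]

lemma pstar_of_common {p : ℕ} (b : V (ZMod p)) (t : ZMod p)
    (h1 : qq1 b t = 0) (h2 : qq2 b t = 0) : Pstar b = 0 := by
  rw [qq1] at h1; rw [qq2] at h2
  have hb1 : b 1 = -2 * t * b 2 - t ^ 2 * b 3 := by linear_combination h2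
  have hb0 : b 0 = 3 * t ^ 2 * b 2 + 2 * t ^ 3 * b 3 := by linear_combination h1 - 2 * t * h2
  simp only [Pstar]
  rw [hb0, hb1]; ring

lemma pstar_of_b23 {p : ℕ} (b : V (ZMod p)) (h2 : b 2 = 0) (h3 : b 3 = 0) :
    Pstar b = 0 := by
  simp only [Pstar]; rw [h2, h3]; ring

lemma Ncount_of_pstar_ne {p : ℕ} [NeZero p] (b : V (ZMod p)) (hP : Pstar b ≠ 0) :
    Ncount p b = 0 := by
  have h1 : Zset p b = ∅ := by
    ext t
    simp only [Zset, Finset.mem_filter, Finset.mem_univ, true_and, Finset.notMem_empty,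
      iff_false]
    rintro ⟨ha, hb⟩
    exact hP (pstar_of_common b t ha hb)
  have h2 : ¬(b 2 = 0 ∧ b 3 = 0) := fun ⟨ha, hb⟩ => hP (pstar_of_b23 b ha hb)
  simp [Ncount, h1, h2]

lemma exists_common {p : ℕ} [NeZero p] [Fact p.Prime] (h2 : (2 : ZMod p) ≠ 0)
    (b : V (ZMod p)) (hP : Pstar b = 0) (hb23 : ¬(b 2 = 0 ∧ b 3 = 0)) :
    ∃ t, qq1 b t = 0 ∧ qq2 b t = 0 := by
  have hPs : 3 * (b 1) ^ 2 * (b 2) ^ 2 + 6 * b 0 * b 1 * b 2 * b 3 - 4 * b 0 * (b 2) ^ 3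
      - 4 * (b 1) ^ 3 * b 3 - (b 0) ^ 2 * (b 3) ^ 2 = 0 := hP
  by_cases hD1 : b 1 * b 3 - b 2 ^ 2 = 0
  · have hb3 : b 3 ≠ 0 := by
      intro h3
      refine hb23 ⟨?_, h3⟩
      have hsq : b 2 ^ 2 = 0 := by linear_combination -hD1 + b 1 * h3
      exact pow_eq_zero_iff two_ne_zero |>.mp hsq
    have hD2 : b 0 * b 3 - b 1 * b 2 = 0 := by
      have hsq : (b 0 * b 3 - b 1 * b 2) ^ 2 = 0 := by
        linear_combination (4 * (b 0 * b 2 - b 1 ^ 2)) * hD1 - hPs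
      exact pow_eq_zero_iff two_ne_zero |>.mp hsq
    refine ⟨-(b 2 * (b 3)⁻¹), ?_, ?_⟩
    · rw [qq1]; field_simp; ring_nf
      linear_combination b 3 * hD2 - b 2 * hD1
    · rw [qq2]; field_simp; ring_nf
      linear_combination hD1
  · have h2D1 : (2 * (b 1 * b 3 - b 2 ^ 2)) ≠ 0 := mul_ne_zero h2 hD1
    refine ⟨-((b 0 * b 3 - b 1 * b 2) * (2 * (b 1 * b 3 - b 2 ^ 2))⁻¹), ?_, ?_⟩
    · rw [qq1]; field_simp; ring_nf
      linear_combination (-b 2) * hPs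
    · rw [qq2]; field_simp; ring_nf
      linear_combination (-b 3) * hPs

lemma unique_common {p : ℕ} [Fact p.Prime] (h2 : (2 : ZMod p) ≠ 0) (b : V (ZMod p))
    (s t : ZMod p) (hs : qq1 b s = 0 ∧ qq2 b s = 0) (ht : qq1 b t = 0 ∧ qq2 b t = 0)
    (hst : s ≠ t) : b 2 = 0 ∧ b 3 = 0 := by
  obtain ⟨E1, E2⟩ := hs
  obtain ⟨E3, E4⟩ := ht
  rw [qq1] at E1 E3; rw [qq2] at E2 E4
  have hd : s - t ≠ 0 := sub_ne_zero.mpr hst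
  have hA : (s - t) * (2 * b 2 + b 3 * (s + t)) = 0 := by linear_combination E2 - E4
  have hA' : 2 * b 2 + b 3 * (s + t) = 0 := (mul_eq_zero.mp hA).resolve_left hd
  have hB : (s - t) * (2 * b 1 + b 2 * (s + t)) = 0 := by linear_combination E1 - E3
  have hB' : 2 * b 1 + b 2 * (s + t) = 0 := (mul_eq_zero.mp hB).resolve_left hd
  have hb3' : (s - t) ^ 2 * b 3 = 0 := by
    linear_combination 4 * E2 - 2 * hB' - (3 * s - t) * hA'
  have hb3 : b 3 = 0 := (mul_eq_zero.mp hb3').resolve_left (pow_ne_zero 2 hd)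
  have hb2' : 2 * b 2 = 0 := by linear_combination hA' - (s + t) * hb3
  exact ⟨(mul_eq_zero.mp hb2').resolve_left h2, hb3⟩

lemma zero_of_common_b23 {p : ℕ} (b : V (ZMod p)) (t : ZMod p)
    (hq : qq1 b t = 0 ∧ qq2 b t = 0) (h23 : b 2 = 0 ∧ b 3 = 0) : b = 0 := by
  obtain ⟨E1, E2⟩ := hq
  rw [qq1] at E1; rw [qq2] at E2
  have hb1 : b 1 = 0 := by linear_combination E2 - 2 * t * h23.1 - t ^ 2 * h23.2
  have hb0 : b 0 = 0 := by linear_combination E1 - 2 * t * hb1 - t ^ 2 * h23.1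
  funext i
  fin_cases i
  · exact hb0
  · exact hb1
  · exact h23.1
  · exact h23.2

lemma Ncount_of_pstar_eq_big {p : ℕ} [NeZero p] [Fact p.Prime] (h2 : (2 : ZMod p) ≠ 0)
    (b : V (ZMod p)) (hP : Pstar b = 0) (hb : b ≠ 0) : Ncount p b = 1 := by
  by_cases hb23 : b 2 = 0 ∧ b 3 = 0
  · have hZ : Zset p b = ∅ := by
      ext t
      simp only [Zset, Finset.mem_filter, Finset.mem_univ, true_and,
        Finset.notMem_empty, iff_false]
      intro hq
      exact hb (zero_of_common_b23 b t hq hb23)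
    simp [Ncount, hZ, hb23]
  · obtain ⟨t0, ht0⟩ := exists_common h2 b hP hb23
    have hZ : Zset p b = {t0} := by
      ext s
      simp only [Zset, Finset.mem_filter, Finset.mem_univ, true_and, Finset.mem_singleton]
      constructor
      · intro hs
        by_contra hne
        exact hb23 (unique_common h2 b s t0 hs ht0 hne)
      · rintro rfl
        exact ht0
    simp [Ncount, hZ, hb23]

lemma Nfacts2 : ∀ b : V (ZMod 2), Pstar b = 0 → b ≠ 0 → Ncount 2 b = 1 := by decide

lemma Ncount_of_pstar_eq {p : ℕ} [NeZero p] [Fact p.Prime] (b : V (ZMod p))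
    (hP : Pstar b = 0) (hb : b ≠ 0) : Ncount p b = 1 := by
  by_cases hp2 : (2 : ZMod p) = 0
  · have hp : p.Prime := Fact.out
    have hdvd : p ∣ 2 := by
      exact_mod_cast (ZMod.natCast_eq_zero_iff 2 p).mp (by exact_mod_cast hp2)
    have hp2' : p = 2 := (Nat.prime_dvd_prime_iff_eq hp Nat.prime_two).mp hdvd
    subst hp2'
    exact Nfacts2 b hP hb
  · exact Ncount_of_pstar_eq_big hp2 b hP hb

end Counting

section Assembly

variable {p : ℕ} [Fact p.Prime]

/-- Index set parametrising the singular forms: a representative point of `ℙ¹` and a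
linear form. -/
abbrev Idx (p : ℕ) := (ZMod p ⊕ Unit) × (ZMod p × ZMod p)

/-- Representatives of `ℙ¹(𝔽_p)`. -/
def lrep {p : ℕ} : ZMod p ⊕ Unit → ZMod p × ZMod p :=
  Sum.elim (fun t => (1, t)) (fun _ => (0, 1))

/-- The parametrisation `(l, m) ↦ l²·m` of the singular locus. -/
def PhiMap {p : ℕ} (i : Idx p) : V (ZMod p) := lin3Mul (lrep i.1) (lrep i.1) i.2

lemma pair_PhiMap (b : V (ZMod p)) (j : ZMod p ⊕ Unit) (m : ZMod p × ZMod p) :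
    pairV (PhiMap (j, m)) b
      = m.1 * (Sum.elim (qq1 b) (fun _ => b 2) j)
        + m.2 * (Sum.elim (qq2 b) (fun _ => b 3) j) := by
  cases j with
  | inl t =>
    show pairV (lin3Mul (1, t) (1, t) m) b = _
    rw [show ((1 : ZMod p), t) = ((1 : ZMod p), ((1 : ZMod p), t).2) from rfl,
      lin3Mul_app ((1 : ZMod p), t) m]
    simp only [pairV, Matrix.cons_val_zero, Matrix.cons_val_one, Matrix.head_cons,
      Matrix.cons_val_two, Matrix.tail_cons, Matrix.cons_val_three, Sum.elim_inl, qq1, qq2]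
    ring
  | inr u =>
    show pairV (lin3Mul (0, 1) (0, 1) m) b = _
    rw [lin3Mul01_app m]
    simp only [pairV, Matrix.cons_val_zero, Matrix.cons_val_one, Matrix.head_cons,
      Matrix.cons_val_two, Matrix.tail_cons, Matrix.cons_val_three, Sum.elim_inr]
    ring

lemma PhiMap_eq_zero (i : Idx p) : PhiMap i = 0 ↔ i.2 = 0 := by
  obtain ⟨j, m⟩ := i
  constructor
  · intro h
    cases j with
    | inl t =>
      have h' := (eq_lin3Mul1_iff (0 : V (ZMod p)) t m.1 m.2).mp h.symm
      have hm1 : m.1 = 0 := by simpa using h'.1.symm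
      have hm2 : m.2 = 0 := by
        have := h'.2.1
        simp only [Pi.zero_apply] at this
        linear_combination -this - 2 * t * hm1
      exact Prod.ext hm1 hm2
    | inr u =>
      have h' := (eq_lin3Mul01_iff (0 : V (ZMod p)) m.1 m.2).mp h.symm
      have hm1 : m.1 = 0 := by simpa using h'.2.2.1.symm
      have hm2 : m.2 = 0 := by simpa using h'.2.2.2.symm
      exact Prod.ext hm1 hm2
  · intro h
    rw [show m = 0 from h]
    cases j <;> · funext k; fin_cases k <;> simp [PhiMap, lin3Mul, lrep]

lemma scalar_unique (s t m1 m2 n1 n2 : ZMod p) (hst : s ≠ t)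
    (E0 : m1 = n1) (E1 : m2 + 2*s*m1 = n2 + 2*t*n1)
    (E2 : 2*s*m2 + s^2*m1 = 2*t*n2 + t^2*n1) (E3 : s^2*m2 = t^2*n2) :
    m1 = 0 ∧ m2 = 0 ∧ n1 = 0 ∧ n2 = 0 := by
  subst E0
  have hd : s - t ≠ 0 := sub_ne_zero.mpr hst
  have hG1 : (s - t) * (2*m2 + (s - 3*t)*m1) = 0 := by linear_combination E2 - 2*t*E1
  have G1 : 2*m2 + (s - 3*t)*m1 = 0 := (mul_eq_zero.mp hG1).resolve_left hd
  have hG2 : (s - t) * ((s + t)*m2 - 2*t^2*m1) = 0 := by linear_combination E3 - t^2*E1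
  have G2 : (s + t)*m2 - 2*t^2*m1 = 0 := (mul_eq_zero.mp hG2).resolve_left hd
  have hm1' : (s - t)^2 * m1 = 0 := by linear_combination (s + t) * G1 - 2 * G2
  have hm1 : m1 = 0 := (mul_eq_zero.mp hm1').resolve_left (pow_ne_zero 2 hd)
  have hm2' : (s - t)^2 * m2 = 0 := by
    linear_combination (s - t) * G2 - t * (s - t) * G1 + (t * (s - t)^2) * hm1
  have hm2 : m2 = 0 := (mul_eq_zero.mp hm2').resolve_left (pow_ne_zero 2 hd)
  have hn2 : n2 = 0 := by linear_combination -E1 + hm2 + (2*s - 2*t) * hm1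
  exact ⟨hm1, hm2, hm1, hn2⟩

lemma coords_of_eq {s : ZMod p} {m : ZMod p × ZMod p} {a : V (ZMod p)}
    (h : a = lin3Mul (1, s) (1, s) m) :
    a 0 = m.1 ∧ a 1 = m.2 + 2*s*m.1 ∧ a 2 = 2*s*m.2 + s^2*m.1 ∧ a 3 = s^2*m.2 :=
  (eq_lin3Mul1_iff a s m.1 m.2).mp h

lemma PhiMap_inj_mixed (s : ZMod p) (m m' : ZMod p × ZMod p)
    (h : PhiMap (Sum.inl s, m) = PhiMap ((Sum.inr () : ZMod p ⊕ Unit), m')) :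
    m = 0 ∧ m' = 0 := by
  have hC := coords_of_eq (a := PhiMap (Sum.inl s, m)) (rfl : PhiMap (Sum.inl s, m) = _)
  have hC' := (eq_lin3Mul01_iff (PhiMap (Sum.inl s, m)) m'.1 m'.2).mp h
  obtain ⟨c0, c1, c2, c3⟩ := hC
  obtain ⟨d0, d1, d2, d3⟩ := hC'
  have hm1 : m.1 = 0 := c0.symm.trans d0
  have hm2 : m.2 = 0 := by linear_combination c1.symm.trans d1 - 2 * s * hm1
  have hn1 : m'.1 = 0 := by linear_combination -(c2.symm.trans d2)
    + 2 * s * hm2 + s^2 * hm1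
  have hn2 : m'.2 = 0 := by linear_combination -(c3.symm.trans d3) + s^2 * hm2
  exact ⟨Prod.ext hm1 hm2, Prod.ext hn1 hn2⟩

lemma PhiMap_inj (i i' : Idx p) (h : PhiMap i = PhiMap i') :
    i = i' ∨ (i.2 = 0 ∧ i'.2 = 0) := by
  obtain ⟨j, m⟩ := i
  obtain ⟨j', m'⟩ := i'
  cases j with
  | inl s =>
    cases j' with
    | inl t =>
      have hC := coords_of_eq (a := PhiMap (Sum.inl s, m)) (rfl : PhiMap (Sum.inl s, m) = _)
      have hC' := coords_of_eq (a := PhiMap (Sum.inl s, m))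
        (h : PhiMap (Sum.inl s, m) = lin3Mul (1, t) (1, t) m')
      obtain ⟨c0, c1, c2, c3⟩ := hC
      obtain ⟨d0, d1, d2, d3⟩ := hC'
      by_cases hst : s = t
      · subst hst
        left
        have hm1 : m.1 = m'.1 := c0.symm.trans d0
        have hm2 : m.2 = m'.2 := by linear_combination c1.symm.trans d1 - 2 * s * hm1
        rw [Prod.ext hm1 hm2]
      · right
        obtain ⟨hm1, hm2, hn1, hn2⟩ := scalar_unique s t m.1 m.2 m'.1 m'.2 hst
          (c0.symm.trans d0) (c1.symm.trans d1) (c2.symm.trans d2) (c3.symm.trans d3)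
        exact ⟨Prod.ext hm1 hm2, Prod.ext hn1 hn2⟩

    | inr u =>
      right
      exact PhiMap_inj_mixed s m m' h
  | inr u =>
    cases j' with
    | inl t =>
      right
      obtain ⟨h1, h2⟩ := PhiMap_inj_mixed t m' m h.symm
      exact ⟨h2, h1⟩
    | inr u' =>
      left
      have hC' := (eq_lin3Mul01_iff (PhiMap (Sum.inr u, m)) m'.1 m'.2).mp h
      have hC := (eq_lin3Mul01_iff (PhiMap (Sum.inr u, m)) m.1 m.2).mp rfl
      have hm1 : m.1 = m'.1 := hC.2.2.1.symm.trans hC'.2.2.1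
      have hm2 : m.2 = m'.2 := hC.2.2.2.symm.trans hC'.2.2.2
      rw [Prod.ext hm1 hm2, Subsingleton.elim u u']

end Assembly

section MainSum

variable {p : ℕ} [Fact p.Prime]

lemma sum_A (b : V (ZMod p)) :
    ∑ i : Idx p, eN p (pairV (PhiMap i) b) = (p : ℂ)^2 * ((Ncount p b : ℕ) : ℂ) := by
  haveI : NeZero p := ⟨(Fact.out : p.Prime).ne_zero⟩
  rw [Fintype.sum_prod_type]
  have step : ∀ j : ZMod p ⊕ Unit, ∑ m : ZMod p × ZMod p, eN p (pairV (PhiMap (j, m)) b)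
      = if (Sum.elim (qq1 b) (fun _ => b 2) j = 0 ∧ Sum.elim (qq2 b) (fun _ => b 3) j = 0)
        then ((p : ℂ))^2 else 0 := by
    intro j
    rw [← sum_pair p (Sum.elim (qq1 b) (fun _ => b 2) j) (Sum.elim (qq2 b) (fun _ => b 3) j)]
    exact Finset.sum_congr rfl fun m _ => by rw [pair_PhiMap]
  rw [Finset.sum_congr rfl fun j _ => step j]
  rw [Fintype.sum_sum_type]
  have h1 : ∑ t : ZMod p,
      (if (Sum.elim (qq1 b) (fun _ => b 2) (Sum.inl t : ZMod p ⊕ Unit) = 0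
          ∧ Sum.elim (qq2 b) (fun _ => b 3) (Sum.inl t : ZMod p ⊕ Unit) = 0)
        then ((p:ℂ))^2 else 0)
      = ((Zset p b).card : ℂ) * (p:ℂ)^2 := by
    show (∑ t : ZMod p, if qq1 b t = 0 ∧ qq2 b t = 0 then ((p:ℂ))^2 else 0) = _
    rw [← Finset.sum_filter]
    rw [Finset.sum_const, nsmul_eq_mul]
    congr 2
  have h2 : ∑ u : Unit,
      (if (Sum.elim (qq1 b) (fun _ => b 2) (Sum.inr u : ZMod p ⊕ Unit) = 0
          ∧ Sum.elim (qq2 b) (fun _ => b 3) (Sum.inr u : ZMod p ⊕ Unit) = 0)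
        then ((p:ℂ))^2 else 0)
      = if (b 2 = 0 ∧ b 3 = 0) then ((p:ℂ))^2 else 0 := by
    simp
    exact if_congr Iff.rfl rfl rfl
  rw [h1, h2, Ncount]
  by_cases hb23 : b 2 = 0 ∧ b 3 = 0 <;> simp [hb23] <;> push_cast <;> ring

lemma sum_PhiMap (f : V (ZMod p) → ℂ) (hf0 : f 0 = 1) :
    ∑ i : Idx p, f (PhiMap i)
      = (∑ a ∈ Finset.univ.filter (fun a : V (ZMod p) => P a = 0), f a) + p := by
  classical
  haveI : NeZero p := ⟨(Fact.out : p.Prime).ne_zero⟩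
  rw [Finset.sum_comp f PhiMap]
  have himg : (Finset.univ : Finset (Idx p)).image PhiMap
      = Finset.univ.filter (fun a : V (ZMod p) => P a = 0) := by
    ext v
    simp only [Finset.mem_image, Finset.mem_univ, true_and, Finset.mem_filter]
    constructor
    · rintro ⟨i, rfl⟩
      exact P_lin3Mul_sq _ _
    · intro hv
      rcases FT_classify p v hv with ⟨t, m1, m2, rfl⟩ | ⟨m1, m2, rfl⟩
      · exact ⟨(Sum.inl t, (m1, m2)), rfl⟩
      · exact ⟨(Sum.inr (), (m1, m2)), rfl⟩
  rw [himg]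
  have h0mem : (0 : V (ZMod p)) ∈ Finset.univ.filter (fun a : V (ZMod p) => P a = 0) := by
    rw [Finset.mem_filter]; exact ⟨Finset.mem_univ _, by simp [P]⟩
  have hfib0 : (Finset.univ.filter
      (fun i : Idx p => PhiMap i = (0 : V (ZMod p)))).card = p + 1 := by
    have he : Finset.univ.filter (fun i : Idx p => PhiMap i = (0 : V (ZMod p)))
        = Finset.univ ×ˢ {(0 : ZMod p × ZMod p)} := by
      ext i
      simp only [Finset.mem_filter, Finset.mem_univ, true_and, PhiMap_eq_zero,
        Finset.mem_product, Finset.mem_singleton]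
    rw [he, Finset.card_product]
    simp [ZMod.card]
  have hfib1 : ∀ v : V (ZMod p), v ≠ 0 → ∀ i0 : Idx p, PhiMap i0 = v →
      (Finset.univ.filter (fun i : Idx p => PhiMap i = v)).card = 1 := by
    intro v hv i0 hi0
    rw [Finset.card_eq_one]
    refine ⟨i0, ?_⟩
    ext i
    simp only [Finset.mem_filter, Finset.mem_univ, true_and, Finset.mem_singleton]
    constructor
    · intro hi
      rcases PhiMap_inj i i0 (hi.trans hi0.symm) with h | h
      · exact h
      · exact absurd (hi0 ▸ (PhiMap_eq_zero i0).mpr h.2) hv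
    · rintro rfl
      exact hi0
  rw [← Finset.add_sum_erase _
    (fun v => (Finset.univ.filter (fun i : Idx p => PhiMap i = v)).card • f v) h0mem,
    ← Finset.add_sum_erase _ f h0mem]
  have hrest : ∑ v ∈ (Finset.univ.filter (fun a : V (ZMod p) => P a = 0)).erase 0,
      (Finset.univ.filter (fun i : Idx p => PhiMap i = v)).card • f v
      = ∑ v ∈ (Finset.univ.filter (fun a : V (ZMod p) => P a = 0)).erase 0, f v := by
    apply Finset.sum_congr rfl
    intro v hv
    have hv0 : v ≠ 0 := Finset.ne_of_mem_erase hv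
    have hvP : v ∈ Finset.univ.filter (fun a : V (ZMod p) => P a = 0) :=
      Finset.mem_of_mem_erase hv
    have hvI : v ∈ (Finset.univ : Finset (Idx p)).image PhiMap := by rw [himg]; exact hvP
    obtain ⟨i0, -, hi0⟩ := Finset.mem_image.mp hvI
    rw [hfib1 v hv0 i0 hi0, one_smul]
  rw [hrest, hfib0, hf0]
  push_cast
  ring

lemma main_sum (b : V (ZMod p)) :
    ∑ a : V (ZMod p), (if P a = 0 then eN p (pairV a b) else 0)
      = (p : ℂ)^2 * ((Ncount p b : ℕ) : ℂ) - p := by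
  classical
  haveI : NeZero p := ⟨(Fact.out : p.Prime).ne_zero⟩
  have hf0 : eN p (pairV (0 : V (ZMod p)) b) = 1 := by
    have h : pairV (0 : V (ZMod p)) b = 0 := by simp [pairV]
    rw [h, eN_zero]
  have hB := sum_PhiMap (p := p) (fun v => eN p (pairV v b)) hf0
  have hA := sum_A b
  rw [← Finset.sum_filter]
  linear_combination hA - hB

end MainSum

/-- The Fourier transform of the characteristic function of the discriminant-zero
locus in `V(𝔽_p)`. -/
theorem fourier_transform_fp (p : ℕ) [Fact p.Prime] :
    ∀ b : V (ZMod p),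
      (Pstar b ≠ 0 →
        fhat p (Set.indicator {a : V (ZMod p) | P a = 0} fun _ => (1 : ℂ)) b
          = -((p : ℂ) ^ 3)⁻¹) ∧
      (Pstar b = 0 → b ≠ 0 →
        fhat p (Set.indicator {a : V (ZMod p) | P a = 0} fun _ => (1 : ℂ)) b
          = ((p : ℂ) ^ 2)⁻¹ - ((p : ℂ) ^ 3)⁻¹) ∧
      (b = 0 →
        fhat p (Set.indicator {a : V (ZMod p) | P a = 0} fun _ => (1 : ℂ)) b
          = (p : ℂ)⁻¹ + ((p : ℂ) ^ 2)⁻¹ - ((p : ℂ) ^ 3)⁻¹) := by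
  intro b
  classical
  haveI : NeZero p := ⟨(Fact.out : p.Prime).ne_zero⟩
  have hp0 : (p : ℂ) ≠ 0 := Nat.cast_ne_zero.mpr (Fact.out : p.Prime).ne_zero
  have hsum : fhat p (Set.indicator {a : V (ZMod p) | P a = 0} fun _ => (1 : ℂ)) b
      = ((p : ℂ) ^ 4)⁻¹ * ((p : ℂ)^2 * ((Ncount p b : ℕ) : ℂ) - p) := by
    rw [fhat]
    congr 1
    rw [← main_sum b]
    apply Finset.sum_congr rfl
    intro a _
    by_cases ha : P a = 0 <;>
      simp [Set.indicator_apply, ha, Set.mem_setOf_eq]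
  refine ⟨?_, ?_, ?_⟩
  · intro hPs
    rw [hsum, Ncount_of_pstar_ne b hPs]
    push_cast
    field_simp
    ring
  · intro hPs hb
    rw [hsum, Ncount_of_pstar_eq b hPs hb]
    push_cast
    field_simp
  · intro hb
    subst hb
    rw [hsum, Ncount_zero p]
    push_cast
    field_simp

end OrbitalL
end
end

section
/- Let N be a squarefree positive integer, let w ∈ ℂ, and let F : ℕ → ℂ be any function. Then Σ_{m ∣ N} μ(m) · m^w · Σ_{(m₁,m₂,m₃) : m₁m₂m₃ = m} μ(m₁) · m₂ · m₃^{−w} · F(m₂) = N^w · Σ_{m ∣ N} μ(m) · m · F(m), where μ is the Möbius function, the inner sum is over ordered triples of positive integers with product m, and for a positive integer n, n^w = exp(w·log n). -/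
/- Common setup: the space of binary cubic forms, the twisted GL₂-action,
the dual action, discriminants, finite Fourier transforms and orbital Gauss sums. -/

noncomputable section

open scoped BigOperators

namespace OrbitalL

variable {R : Type*} [CommRing R]

open ArithmeticFunction Finset in
/-- The Möbius-sum identity underlying the self-dual functional equation of the
`N`-divisible zeta function. -/
theorem moebius_triple_sum_identity (N : ℕ) (hN : 0 < N) (hsq : Squarefree N)
    (w : ℂ) (F : ℕ → ℂ) :
    ∑ m ∈ N.divisors, (ArithmeticFunction.moebius m : ℂ) * (m : ℂ) ^ w *
        ∑ x ∈ m.divisorsAntidiagonal, (ArithmeticFunction.moebius x.1 : ℂ) *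
          ∑ y ∈ x.2.divisorsAntidiagonal, (y.1 : ℂ) * (y.2 : ℂ) ^ (-w) * F y.1
      = (N : ℂ) ^ w * ∑ m ∈ N.divisors, (ArithmeticFunction.moebius m : ℂ) * (m : ℂ) * F m := by
  classical
  set pw : ArithmeticFunction ℂ := ⟨fun n => if n = 0 then 0 else (n : ℂ) ^ w, if_pos rfl⟩ with hpwdef
  set G : ArithmeticFunction ℂ :=
    ⟨fun n => if n = 0 then 0 else (moebius n : ℂ) * n * (n : ℂ) ^ w * F n, if_pos rfl⟩ with hGdef
  have key : ∀ m ∈ N.divisors,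
      (ArithmeticFunction.moebius m : ℂ) * (m : ℂ) ^ w *
        ∑ x ∈ m.divisorsAntidiagonal, (ArithmeticFunction.moebius x.1 : ℂ) *
          ∑ y ∈ x.2.divisorsAntidiagonal, (y.1 : ℂ) * (y.2 : ℂ) ^ (-w) * F y.1
      = (pw * (G * (moebius : ArithmeticFunction ℤ))) m := by
    intro m hm
    obtain ⟨hmd, hN0⟩ := Nat.mem_divisors.mp hm
    have hsm : Squarefree m := hsq.squarefree_of_dvd hmd
    rw [mul_apply, Finset.mul_sum]
    refine Finset.sum_congr rfl fun x hx => ?_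
    obtain ⟨hxm, hm0⟩ := Nat.mem_divisorsAntidiagonal.mp hx
    rw [mul_apply, Finset.mul_sum, Finset.mul_sum, Finset.mul_sum]
    refine Finset.sum_congr rfl fun y hy => ?_
    obtain ⟨hyx, hx0⟩ := Nat.mem_divisorsAntidiagonal.mp hy
    set a := x.1; set b := y.1; set c := y.2
    have habc : a * (b * c) = m := by rw [hyx]; exact hxm
    have hsabc : Squarefree (a * (b * c)) := habc ▸ hsm
    obtain ⟨hco1, hsa, hsbc⟩ := Nat.squarefree_mul_iff.mp hsabc
    obtain ⟨hco2, hsb, hsc⟩ := Nat.squarefree_mul_iff.mp hsbc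
    have ha0 : a ≠ 0 := left_ne_zero_of_mul (habc ▸ hm0)
    have hbc0 : b * c ≠ 0 := by rw [hyx]; exact hx0
    have hb0 : b ≠ 0 := left_ne_zero_of_mul hbc0
    have hc0 : c ≠ 0 := right_ne_zero_of_mul hbc0
    have hmu : (moebius m : ℂ) = (moebius a : ℂ) * moebius b * moebius c := by
      rw [← habc, isMultiplicative_moebius.map_mul_of_coprime hco1,
        isMultiplicative_moebius.map_mul_of_coprime hco2]
      push_cast; ring
    have h2 : ∀ p q : ℕ, ((p * q : ℕ) : ℂ) ^ w = (p : ℂ) ^ w * (q : ℂ) ^ w := fun p q => by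
      rw [Nat.cast_mul, Complex.natCast_mul_natCast_cpow]
    have hmw : (m : ℂ) ^ w = (a : ℂ) ^ w * ((b : ℂ) ^ w * (c : ℂ) ^ w) := by
      rw [← habc, h2, h2]
    have e1 : (moebius a : ℂ) * moebius a = 1 := by
      have : (moebius a : ℤ) * moebius a = 1 := by
        rw [moebius_apply_of_squarefree hsa, ← pow_add]
        exact Even.neg_one_pow ⟨_, rfl⟩
      exact_mod_cast congrArg (Int.cast : ℤ → ℂ) this
    have e2 : (c : ℂ) ^ w * (c : ℂ) ^ (-w) = 1 := by
      rw [← Complex.cpow_add _ _ (by exact_mod_cast hc0)]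
      simp
    show (moebius m : ℂ) * (m : ℂ) ^ w * ((moebius a : ℂ) * ((b : ℂ) * (c : ℂ) ^ (-w) * F b))
        = pw a * (G b * (((moebius : ArithmeticFunction ℤ) : ArithmeticFunction ℂ) c))
    rw [hmu, hmw, intCoe_apply, hpwdef, hGdef]
    simp only [coe_mk, if_neg ha0, if_neg hb0]
    linear_combination ((moebius b : ℂ) * moebius c * (a:ℂ)^w * (b:ℂ)^w * b * F b *
        ((c:ℂ)^w * (c:ℂ)^(-w))) * e1 +
      ((moebius b : ℂ) * moebius c * (a:ℂ)^w * (b:ℂ)^w * b * F b) * e2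
  rw [Finset.sum_congr rfl key, ← coe_mul_zeta_apply,
    show (pw * (G * (moebius : ArithmeticFunction ℤ))) * (zeta : ArithmeticFunction ℂ)
      = G * (pw * (((moebius : ArithmeticFunction ℤ) : ArithmeticFunction ℂ) * zeta)) by ring,
    coe_moebius_mul_coe_zeta, mul_one, mul_apply,
    Nat.sum_divisorsAntidiagonal (f := fun a b => G a * pw b), Finset.mul_sum]
  refine Finset.sum_congr rfl fun d hd => ?_
  obtain ⟨hdN, hN0⟩ := Nat.mem_divisors.mp hd
  have hd0 : d ≠ 0 := ne_zero_of_dvd_ne_zero hN0 hdN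
  have hq0 : N / d ≠ 0 := ne_zero_of_dvd_ne_zero hN0 (Nat.div_dvd_of_dvd hdN)
  have hNw : (N : ℂ) ^ w = (d : ℂ) ^ w * ((N / d : ℕ) : ℂ) ^ w := by
    rw [← Complex.natCast_mul_natCast_cpow, ← Nat.cast_mul, Nat.mul_div_cancel' hdN]

  rw [hGdef, hpwdef]
  simp only [ArithmeticFunction.coe_mk, if_neg hd0, if_neg hq0]
  rw [hNw]; ring


end OrbitalL
end
end
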